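/- arXiv:2407.13613 — 6 statements merged into one kernel-verified Lean document; each statement's English description precedes it below -/
import Mathlib

section
/- Let n be an even positive integer, p ≥ 1, suppose Assumption D holds, and let (D_1,...,D_n) be uniformly distributed on the set {d ∈ {0,1}^n : Σ_{i=1}^n d_i = n/2} and independent of (X_1,...,X_n) (complete randomization). Then (C̲/3)·(p/n) ≤ E[||B_{n,p}(X)||²] ≤ (C̄/3)·(p/n). -/
open MeasureTheory ProbabilityTheory Set
open scoped ENNReal NNReal

/-! Put `ε i = 2 D i - 1`, so that `|ε i| = 1` and `∑ i, ε i = 0` almost surely. The second fact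
lets us centre every `X i` at the common mean `c = E X` without changing the imbalance; expanding
the square, the cross terms `E[ε i ε j] E[(X i - c)_k (X j - c)_k]` vanish by independence, and the
diagonal terms give `E ‖∑ i, ε i • X i‖² = n ∑ k, Var (X k)`, so `E ‖B‖² = (4 / n) ∑ k, Var (X k)`.

The density bounds say `C̲ • λ|cube ≤ law X ≤ C̄ • λ|cube` as measures, and this squeeze passes to
each coordinate law with `λ|[0,1]` in place of `λ|cube`. As
`∫ t in 0..1, (t - c)² = 1/12 + (c - 1/2)²`, the lower bound applied to `Var = E (X k - E X k)²`
and the upper bound applied to `Var ≤ E (X k - 1/2)²` give `C̲ / 12 ≤ Var (X k) ≤ C̄ / 12`. -/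

section SignedSums

variable {Ω ι : Type*} [MeasurableSpace Ω] {P : Measure Ω} [Fintype ι] {ε Z : ι → Ω → ℝ}

theorem memLp_sum_mul_of_abs_eq_one {q : ℝ≥0∞} (hε_meas : ∀ i, AEStronglyMeasurable (ε i) P)
    (hε : ∀ᵐ ω ∂P, ∀ i, |ε i ω| = 1) (hZ : ∀ i, MemLp (Z i) q P) :
    MemLp (fun ω => ∑ i, ε i ω * Z i ω) q P :=
  memLp_finsetSum _ fun i _ => (hZ i).of_le ((hε_meas i).mul (hZ i).1) <| by
    filter_upwards [hε] with ω hω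
    simp [hω i]

theorem integral_sq_sum_mul_eq_sum_integral_sq [IsProbabilityMeasure P]
    (hε_meas : ∀ i, AEStronglyMeasurable (ε i) P) (hε : ∀ᵐ ω ∂P, ∀ i, |ε i ω| = 1)
    (hZ : ∀ i, MemLp (Z i) 2 P) (hZ_mean : ∀ i, P[Z i] = 0)
    (hZ_indep : Pairwise fun i j => IndepFun (Z i) (Z j) P)
    (hεZ : IndepFun (fun ω i => ε i ω) (fun ω i => Z i ω) P) :
    ∫ ω, (∑ i, ε i ω * Z i ω) ^ 2 ∂P = ∑ i, ∫ ω, Z i ω ^ 2 ∂P := by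
  classical
  have hterm_int : ∀ i j, Integrable (fun ω => ε i ω * ε j ω * (Z i ω * Z j ω)) P := by
    intro i j
    refine ((hZ i).integrable_mul (hZ j)).mono ((hε_meas i).mul (hε_meas j) |>.mul
      ((hZ i).1.mul (hZ j).1)) ?_
    filter_upwards [hε] with ω hω
    simp [hω i, hω j]
  have hterm : ∀ i j, ∫ ω, ε i ω * ε j ω * (Z i ω * Z j ω) ∂P
      = if i = j then ∫ ω, Z i ω ^ 2 ∂P else 0 := by
    intro i j
    split_ifs with hij
    · subst hij
      refine integral_congr_ae ?_
      filter_upwards [hε] with ω hω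
      have hsq : ε i ω ^ 2 = 1 := by rw [← sq_abs, hω i, one_pow]
      linear_combination (Z i ω ^ 2) * hsq
    · have hprod : IndepFun (fun ω => ε i ω * ε j ω) (fun ω => Z i ω * Z j ω) P :=
        hεZ.comp (φ := fun e : ι → ℝ => e i * e j) (ψ := fun z : ι → ℝ => z i * z j)
          (by fun_prop) (by fun_prop)
      rw [hprod.integral_fun_mul_eq_mul_integral ((hε_meas i).mul (hε_meas j))
          ((hZ i).1.mul (hZ j).1),
        (hZ_indep hij).integral_fun_mul_eq_mul_integral (hZ i).1 (hZ j).1, hZ_mean i, zero_mul,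
        mul_zero]
  calc ∫ ω, (∑ i, ε i ω * Z i ω) ^ 2 ∂P
      = ∫ ω, ∑ i, ∑ j, ε i ω * ε j ω * (Z i ω * Z j ω) ∂P := by
        congr 1; funext ω
        rw [sq, Finset.sum_mul_sum]
        exact Finset.sum_congr rfl fun i _ => Finset.sum_congr rfl fun j _ => by ring
    _ = ∑ i, ∑ j, ∫ ω, ε i ω * ε j ω * (Z i ω * Z j ω) ∂P := by
        rw [integral_finsetSum _ fun i _ => integrable_finsetSum _ fun j _ => hterm_int i j]
        exact Finset.sum_congr rfl fun i _ => integral_finsetSum _ fun j _ => hterm_int i j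
    _ = ∑ i, ∫ ω, Z i ω ^ 2 ∂P := by
        simp only [hterm, Finset.sum_ite_eq, Finset.mem_univ, if_true]

theorem integral_norm_sq_sum_smul_eq {κ : Type*} [Fintype κ] [IsProbabilityMeasure P]
    {X : ι → Ω → EuclideanSpace ℝ κ} {ν : Measure (EuclideanSpace ℝ κ)}
    (hε_meas : ∀ i, AEStronglyMeasurable (ε i) P) (hX_meas : ∀ i, AEMeasurable (X i) P)
    (hε : ∀ᵐ ω ∂P, (∀ i, |ε i ω| = 1) ∧ ∑ i, ε i ω = 0)
    (hX_indep : Pairwise fun i j => IndepFun (X i) (X j) P) (hX_law : ∀ i, P.map (X i) = ν)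
    (hν : ∀ k, MemLp (fun x => x k) 2 ν)
    (hεX : IndepFun (fun ω i => ε i ω) (fun ω i => X i ω) P) :
    ∫ ω, ‖∑ i, ε i ω • X i ω‖ ^ 2 ∂P = Fintype.card ι * ∑ k, Var[fun x => x k; ν] := by
  set c : κ → ℝ := fun k => ν[fun x => x k]
  have hcoord_meas : ∀ k, Measurable fun x : EuclideanSpace ℝ κ => x k := by fun_prop
  have hX_coord : ∀ k i, MemLp (fun ω => X i ω k) 2 P := fun k i =>
    MemLp.comp_of_map (g := fun x : EuclideanSpace ℝ κ => x k) (by rw [hX_law i]; exact hν k)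
      (hX_meas i)
  have hZ : ∀ k i, MemLp (fun ω => X i ω k - c k) 2 P := fun k i =>
    (hX_coord k i).sub (memLp_const _)
  have hX_coord_integral : ∀ k i, ∫ ω, X i ω k ∂P = c k := fun k i => by
    rw [← integral_map (hX_meas i) (hcoord_meas k).aestronglyMeasurable, hX_law i]
  have hZ_mean : ∀ k i, P[fun ω => X i ω k - c k] = 0 := fun k i => by
    rw [integral_sub ((hX_coord k i).integrable one_le_two) (integrable_const _),
      hX_coord_integral, integral_const]
    simp
  have hZ_sq : ∀ k i, ∫ ω, (X i ω k - c k) ^ 2 ∂P = Var[fun x => x k; ν] := fun k i => by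
    rw [variance_eq_integral (hcoord_meas k).aemeasurable, ← hX_law i,
      integral_map (hX_meas i) (by fun_prop), hX_law i]
  have hpointwise : ∀ᵐ ω ∂P, ‖∑ i, ε i ω • X i ω‖ ^ 2
      = ∑ k, (∑ i, ε i ω * (X i ω k - c k)) ^ 2 := by
    filter_upwards [hε] with ω hω
    rw [EuclideanSpace.real_norm_sq_eq]
    refine Finset.sum_congr rfl fun k _ => ?_
    simp only [mul_sub, Finset.sum_sub_distrib, ← Finset.sum_mul, hω.2, zero_mul, sub_zero]
    simp
  rw [integral_congr_ae hpointwise, integral_finsetSum _ fun k _ =>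
    (memLp_sum_mul_of_abs_eq_one hε_meas (hε.mono fun ω h => h.1) (hZ k)).integrable_sq]
  rw [Finset.mul_sum]
  refine Finset.sum_congr rfl fun k _ => ?_
  rw [integral_sq_sum_mul_eq_sum_integral_sq hε_meas (hε.mono fun ω h => h.1) (hZ k) (hZ_mean k)
    (fun i j hij => (hX_indep hij).comp (φ := fun x : EuclideanSpace ℝ κ => x k - c k)
      (ψ := fun x : EuclideanSpace ℝ κ => x k - c k) (by fun_prop) (by fun_prop))
    (hεX.comp (φ := id) (ψ := fun (w : ι → EuclideanSpace ℝ κ) i => w i k - c k) measurable_id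
      (by fun_prop))]
  simp [hZ_sq]

end SignedSums

theorem ae_mem_of_map_eq_smul_sum_dirac {Ω β γ : Type*} [MeasurableSpace Ω] [MeasurableSpace β]
    {P : Measure Ω} {V : Ω → β} (hV : AEMeasurable V P) {S : Finset γ} {g : γ → β} {c : ℝ≥0∞}
    (hlaw : P.map V = c • ∑ d ∈ S, Measure.dirac (g d)) {Q : Set β} (hQ : MeasurableSet Q)
    (hS : ∀ d ∈ S, g d ∈ Q) : ∀ᵐ ω ∂P, V ω ∈ Q := by
  refine (ae_map_iff hV (p := (· ∈ Q)) hQ).1 ?_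
  rw [hlaw, ae_iff, Measure.smul_apply, Measure.finsetSum_apply,
    Finset.sum_eq_zero fun d hd => ?_, smul_zero]
  change Measure.dirac (g d) Qᶜ = 0
  simp [Measure.dirac_apply' _ hQ.compl, hS d hd]

theorem ae_complete_randomization {Ω : Type*} [MeasurableSpace Ω] {P : Measure Ω} {n : ℕ}
    (hn : Even n) {D : Fin n → Ω → ℝ} (hD_meas : ∀ i, Measurable (D i)) {c : ℝ≥0∞}
    (hD_law : P.map (fun ω i => D i ω) = c • ∑ d ∈ Finset.univ.filter
        (fun d : Fin n → Bool => (Finset.univ.filter fun i => d i = true).card = n / 2),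
      Measure.dirac (fun i => if d i then (1 : ℝ) else 0)) :
    ∀ᵐ ω ∂P, (∀ i, |2 * D i ω - 1| = 1) ∧ ∑ i, (2 * D i ω - 1) = 0 := by
  refine ae_mem_of_map_eq_smul_sum_dirac
    (Q := {v | (∀ i, |2 * v i - 1| = 1) ∧ ∑ i, (2 * v i - 1) = 0})
    (measurable_pi_lambda _ hD_meas).aemeasurable hD_law (by measurability) fun d hd => ⟨?_, ?_⟩
  · intro i
    rcases Bool.eq_false_or_eq_true (d i) with h | h <;> norm_num [h]
  · have hcard : ∑ i, (if d i then (1 : ℝ) else 0) = n / 2 := by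
      rw [Finset.sum_boole, (Finset.mem_filter.1 hd).2, Nat.cast_div hn.two_dvd two_ne_zero]
      simp
    rw [Finset.sum_sub_distrib, ← Finset.mul_sum, hcard]
    simp only [Finset.sum_const, Finset.card_univ, Fintype.card_fin, nsmul_eq_mul, mul_one]
    ring

def unitCube (ι : Type*) : Set (EuclideanSpace ℝ ι) := {x | ∀ k, x k ∈ Icc (0 : ℝ) 1}

theorem unitCube_eq_preimage_ofLp (ι : Type*) :
    unitCube ι = WithLp.ofLp ⁻¹' univ.pi fun _ => Icc (0 : ℝ) 1 := by
  ext x; simp only [mem_preimage, mem_univ_pi]; rfl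

theorem measurableSet_unitCube (ι : Type*) [Fintype ι] : MeasurableSet (unitCube ι) := by
  rw [unitCube_eq_preimage_ofLp]
  exact (WithLp.measurable_ofLp 2 _) (MeasurableSet.univ_pi fun _ => measurableSet_Icc)

theorem map_coord_volume_restrict_unitCube {ι : Type*} [Fintype ι] (k : ι) :
    (volume.restrict (unitCube ι)).map (fun x => x k) = volume.restrict (Icc (0 : ℝ) 1) := by
  have : IsProbabilityMeasure (volume.restrict (Icc (0 : ℝ) 1)) := ⟨by simp⟩
  have hofLp := (PiLp.volume_preserving_ofLp ι).restrict_preimage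
    (MeasurableSet.univ_pi fun _ => measurableSet_Icc (a := (0 : ℝ)) (b := 1))
  rw [volume_pi, Measure.restrict_pi_pi, ← unitCube_eq_preimage_ofLp] at hofLp
  exact ((measurePreserving_eval _ k).comp hofLp).map_eq

theorem withDensity_ofReal_le_smul_restrict {α : Type*} [MeasurableSpace α] {μ : Measure α}
    {f : α → ℝ} {s : Set α} {b : ℝ} (hs : MeasurableSet s) (hf_out : ∀ x ∉ s, f x = 0)
    (hf_le : ∀ x ∈ s, f x ≤ b) :
    μ.withDensity (fun x => ENNReal.ofReal (f x)) ≤ ENNReal.ofReal b • μ.restrict s := by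
  rw [← withDensity_const, ← withDensity_indicator hs]
  refine withDensity_mono (ae_of_all _ fun x => ?_)
  by_cases hx : x ∈ s
  · simpa [hx] using ENNReal.ofReal_le_ofReal (hf_le x hx)
  · simp [hx, hf_out x hx]

theorem smul_restrict_le_withDensity_ofReal {α : Type*} [MeasurableSpace α] {μ : Measure α}
    {f : α → ℝ} {s : Set α} {a : ℝ} (hs : MeasurableSet s) (hf_ge : ∀ x ∈ s, a ≤ f x) :
    ENNReal.ofReal a • μ.restrict s ≤ μ.withDensity (fun x => ENNReal.ofReal (f x)) := by
  rw [← withDensity_const, ← withDensity_indicator hs]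
  refine withDensity_mono (ae_of_all _ fun x => ?_)
  by_cases hx : x ∈ s
  · simpa [hx] using ENNReal.ofReal_le_ofReal (hf_ge x hx)
  · simp [hx]


theorem integral_Icc_zero_one_sub_sq (c : ℝ) :
    ∫ t in Icc (0 : ℝ) 1, (t - c) ^ 2 = 1 / 12 + (c - 1 / 2) ^ 2 := by
  rw [integral_Icc_eq_integral_Ioc, ← intervalIntegral.integral_of_le zero_le_one,
    intervalIntegral.integral_comp_sub_right (fun t => t ^ 2), integral_pow]
  ring

theorem integral_sub_sq_smul_volume_Icc (a : ℝ≥0) (c : ℝ) :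
    ∫ t, (t - c) ^ 2 ∂((a : ℝ≥0∞) • volume.restrict (Icc (0 : ℝ) 1))
      = a * (1 / 12 + (c - 1 / 2) ^ 2) := by
  rw [integral_smul_measure, integral_Icc_zero_one_sub_sq]
  simp

section UnitInterval

variable {m : Measure ℝ} {a b : ℝ≥0}

theorem integrable_sub_sq_of_le_smul_volume_Icc
    (hb : m ≤ (b : ℝ≥0∞) • volume.restrict (Icc 0 1)) (c : ℝ) :
    Integrable (fun t => (t - c) ^ 2) m := by
  have hIcc : IntegrableOn (fun t => (t - c) ^ 2) (Icc (0 : ℝ) 1) :=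
    (by fun_prop : Continuous fun t : ℝ => (t - c) ^ 2).integrableOn_Icc
  exact (hIcc.smul_measure ENNReal.coe_ne_top).mono_measure hb

theorem variance_id_le_of_le_smul_volume_Icc [IsProbabilityMeasure m]
    (hb : m ≤ (b : ℝ≥0∞) • volume.restrict (Icc 0 1)) : Var[id; m] ≤ b / 12 := by
  calc Var[id; m] = Var[fun t => t - 1 / 2; m] :=
        (variance_sub_const aestronglyMeasurable_id _).symm
    _ ≤ ∫ t, (t - 1 / 2) ^ 2 ∂m := variance_le_expectation_sq (by fun_prop)
    _ ≤ ∫ t, (t - 1 / 2) ^ 2 ∂((b : ℝ≥0∞) • volume.restrict (Icc (0 : ℝ) 1)) :=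
      integral_mono_measure hb (ae_of_all _ fun t => sq_nonneg _)
        (integrable_sub_sq_of_le_smul_volume_Icc le_rfl _)
    _ = b / 12 := by rw [integral_sub_sq_smul_volume_Icc]; ring

theorem le_variance_id_of_smul_volume_Icc_le
    (ha : (a : ℝ≥0∞) • volume.restrict (Icc 0 1) ≤ m)
    (hb : m ≤ (b : ℝ≥0∞) • volume.restrict (Icc 0 1)) : a / 12 ≤ Var[id; m] := by
  set c := m[id]
  calc (a : ℝ) / 12 ≤ a * (1 / 12 + (c - 1 / 2) ^ 2) := by
        nlinarith [a.2, sq_nonneg (c - 1 / 2)]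
    _ = ∫ t, (t - c) ^ 2 ∂((a : ℝ≥0∞) • volume.restrict (Icc (0 : ℝ) 1)) :=
      (integral_sub_sq_smul_volume_Icc a c).symm
    _ ≤ ∫ t, (t - c) ^ 2 ∂m :=
      integral_mono_measure ha (ae_of_all _ fun t => sq_nonneg _)
        (integrable_sub_sq_of_le_smul_volume_Icc hb _)
    _ = Var[id; m] := (variance_eq_integral aemeasurable_id).symm

end UnitInterval

section Cube

variable {ι : Type*} [Fintype ι] {ν : Measure (EuclideanSpace ℝ ι)}

theorem memLp_coord_of_le_smul_volume_unitCube [IsFiniteMeasure ν] {c : ℝ≥0∞}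
    (hc : ν ≤ c • volume.restrict (unitCube ι)) (q : ℝ≥0∞) (k : ι) :
    MemLp (fun x => x k) q ν := by
  refine MemLp.of_bound (by fun_prop) 1 ?_
  filter_upwards [(Measure.absolutelyContinuous_of_le_smul hc).ae_le
    (ae_restrict_mem (measurableSet_unitCube ι))] with x hx
  rw [Real.norm_eq_abs, abs_le]
  exact ⟨by linarith [(hx k).1], (hx k).2⟩

theorem variance_coord_mem_Icc_of_le_of_le [IsProbabilityMeasure ν] {a b : ℝ≥0}
    (ha : (a : ℝ≥0∞) • volume.restrict (unitCube ι) ≤ ν)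
    (hb : ν ≤ (b : ℝ≥0∞) • volume.restrict (unitCube ι)) (k : ι) :
    Var[fun x => x k; ν] ∈ Icc (a / 12 : ℝ) (b / 12) := by
  have hk : Measurable fun x : EuclideanSpace ℝ ι => x k := by fun_prop
  have hmap : ∀ c : ℝ≥0∞, (c • volume.restrict (unitCube ι)).map (fun x => x k)
      = c • volume.restrict (Icc (0 : ℝ) 1) := fun c => by
    rw [Measure.map_smul, map_coord_volume_restrict_unitCube]
  have : IsProbabilityMeasure (ν.map fun x => x k) :=
    Measure.isProbabilityMeasure_map hk.aemeasurable
  have ha' := hmap a ▸ Measure.map_mono ha hk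
  have hb' := hmap b ▸ Measure.map_mono hb hk
  rw [← variance_id_map hk.aemeasurable]
  exact ⟨le_variance_id_of_smul_volume_Icc_le ha' hb', variance_id_le_of_le_smul_volume_Icc hb'⟩

theorem sum_variance_coord_mem_Icc_of_le_of_le [IsProbabilityMeasure ν] {a b : ℝ≥0}
    (ha : (a : ℝ≥0∞) • volume.restrict (unitCube ι) ≤ ν)
    (hb : ν ≤ (b : ℝ≥0∞) • volume.restrict (unitCube ι)) :
    ∑ k, Var[fun x => x k; ν]
      ∈ Icc (Fintype.card ι * (a / 12) : ℝ) (Fintype.card ι * (b / 12)) := by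
  have hvar := variance_coord_mem_Icc_of_le_of_le ha hb
  constructor
  · simpa using Finset.sum_le_sum (s := .univ) fun k _ => (hvar k).1
  · simpa using Finset.sum_le_sum (s := .univ) fun k _ => (hvar k).2

end Cube

theorem complete_randomization_imbalance_bounds_general
    {Ω : Type*} [MeasurableSpace Ω] (P : Measure Ω) [IsProbabilityMeasure P]
    (n p : ℕ) (hn : 0 < n) (hneven : Even n)
    (X : Fin n → Ω → EuclideanSpace ℝ (Fin p)) (D : Fin n → Ω → ℝ)
    (Clo Chi : ℝ) (hClo : 0 < Clo) (hCloChi : Clo ≤ Chi)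
    (f : EuclideanSpace ℝ (Fin p) → ℝ)
    (hXmeas : ∀ i, Measurable (X i))
    (hXindep : iIndepFun X P)
    (hXlaw : ∀ i, Measure.map (X i) P
      = volume.withDensity (fun x => ENNReal.ofReal (f x)))
    (hfsupp : ∀ x : EuclideanSpace ℝ (Fin p),
      ¬ (∀ k, x k ∈ Set.Icc (0 : ℝ) 1) → f x = 0)
    (hfbound : ∀ x : EuclideanSpace ℝ (Fin p),
      (∀ k, x k ∈ Set.Icc (0 : ℝ) 1) → Clo ≤ f x ∧ f x ≤ Chi)
    (hDmeas : ∀ i, Measurable (D i))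
    (hDlaw : Measure.map (fun ω (i : Fin n) => D i ω) P
      = (((Finset.univ.filter
            (fun d : Fin n → Bool =>
              (Finset.univ.filter (fun i => d i = true)).card = n / 2)).card : ENNReal))⁻¹
        • ∑ d ∈ Finset.univ.filter
            (fun d : Fin n → Bool =>
              (Finset.univ.filter (fun i => d i = true)).card = n / 2),
            Measure.dirac (fun i => if d i then (1 : ℝ) else 0))
    (hDX : IndepFun (fun ω (i : Fin n) => D i ω) (fun ω (i : Fin n) => X i ω) P) :
    (Clo / 3) * ((p : ℝ) / n)
        ≤ ∫ ω, ‖(2 / (n : ℝ)) • ∑ i, (2 * D i ω - 1) • X i ω‖ ^ 2 ∂P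
      ∧ ∫ ω, ‖(2 / (n : ℝ)) • ∑ i, (2 * D i ω - 1) • X i ω‖ ^ 2 ∂P
        ≤ (Chi / 3) * ((p : ℝ) / n) := by
  set ν := volume.withDensity fun x : EuclideanSpace ℝ (Fin p) => ENNReal.ofReal (f x)
  have : IsProbabilityMeasure ν :=
    hXlaw ⟨0, hn⟩ ▸ Measure.isProbabilityMeasure_map (hXmeas _).aemeasurable
  have hν_lower : (Clo.toNNReal : ℝ≥0∞) • volume.restrict (unitCube (Fin p)) ≤ ν :=
    smul_restrict_le_withDensity_ofReal (measurableSet_unitCube _) fun x hx => (hfbound x hx).1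
  have hν_upper : ν ≤ (Chi.toNNReal : ℝ≥0∞) • volume.restrict (unitCube (Fin p)) :=
    withDensity_ofReal_le_smul_restrict (measurableSet_unitCube _) hfsupp
      fun x hx => (hfbound x hx).2
  have hεX : IndepFun (fun ω i => 2 * D i ω - 1) (fun ω i => X i ω) P :=
    hDX.comp (φ := fun (d : Fin n → ℝ) i => 2 * d i - 1) (ψ := id) (by fun_prop) measurable_id
  have hsecond_moment := integral_norm_sq_sum_smul_eq
    (fun i => (((hDmeas i).const_mul 2).sub_const 1).aestronglyMeasurable)
    (fun i => (hXmeas i).aemeasurable) (ae_complete_randomization hneven hDmeas hDlaw)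
    (fun i j hij => hXindep.indepFun hij) hXlaw
    (memLp_coord_of_le_smul_volume_unitCube hν_upper 2) hεX
  have hvar := sum_variance_coord_mem_Icc_of_le_of_le hν_lower hν_upper
  simp only [Real.coe_toNNReal _ hClo.le, Real.coe_toNNReal _ (hClo.le.trans hCloChi),
    Fintype.card_fin] at hvar
  have hn' : (n : ℝ) ≠ 0 := by positivity
  have hB : ∫ ω, ‖(2 / (n : ℝ)) • ∑ i, (2 * D i ω - 1) • X i ω‖ ^ 2 ∂P
      = 4 / n * ∑ k, Var[fun x => x k; ν] := by
    simp_rw [norm_smul, mul_pow, Real.norm_eq_abs, sq_abs]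
    rw [integral_const_mul, hsecond_moment, Fintype.card_fin]
    field_simp
    ring
  rw [hB]
  constructor
  · calc Clo / 3 * ((p : ℝ) / n) = 4 / n * (p * (Clo / 12)) := by ring
      _ ≤ _ := by gcongr; exact hvar.1
  · calc 4 / n * ∑ k, Var[fun x => x k; ν] ≤ 4 / n * (p * (Chi / 12)) := by gcongr; exact hvar.2
      _ = Chi / 3 * ((p : ℝ) / n) := by ring

/-- Under Assumption D (i.i.d. covariates with a density `f` supported on
`[0,1]^p`, bounded between `Clo` and `Chi` there) and complete randomization
(the vector `(D₁,…,Dₙ)` is uniform on allocations in `{0,1}ⁿ` with exactly `n/2` ones,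
independent of the covariates), `(Clo/3)(p/n) ≤ E‖B‖² ≤ (Chi/3)(p/n)`. -/
theorem complete_randomization_imbalance_bounds
    {Ω : Type*} [MeasurableSpace Ω] (P : Measure Ω) [IsProbabilityMeasure P]
    (n p : ℕ) (hn : 0 < n) (hneven : Even n) (hp : 0 < p)
    (X : Fin n → Ω → EuclideanSpace ℝ (Fin p)) (D : Fin n → Ω → ℝ)
    (Clo Chi : ℝ) (hClo : 0 < Clo) (hCloChi : Clo ≤ Chi)
    (f : EuclideanSpace ℝ (Fin p) → ℝ) (hfmeas : Measurable f)
    (hXmeas : ∀ i, Measurable (X i))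
    (hXindep : iIndepFun X P)
    (hXlaw : ∀ i, Measure.map (X i) P
      = volume.withDensity (fun x => ENNReal.ofReal (f x)))
    (hfsupp : ∀ x : EuclideanSpace ℝ (Fin p),
      ¬ (∀ k, x k ∈ Set.Icc (0 : ℝ) 1) → f x = 0)
    (hfbound : ∀ x : EuclideanSpace ℝ (Fin p),
      (∀ k, x k ∈ Set.Icc (0 : ℝ) 1) → Clo ≤ f x ∧ f x ≤ Chi)
    (hDmeas : ∀ i, Measurable (D i))
    (hDlaw : Measure.map (fun ω (i : Fin n) => D i ω) P
      = (((Finset.univ.filter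
            (fun d : Fin n → Bool =>
              (Finset.univ.filter (fun i => d i = true)).card = n / 2)).card : ENNReal))⁻¹
        • ∑ d ∈ Finset.univ.filter
            (fun d : Fin n → Bool =>
              (Finset.univ.filter (fun i => d i = true)).card = n / 2),
            Measure.dirac (fun i => if d i then (1 : ℝ) else 0))
    (hDX : IndepFun (fun ω (i : Fin n) => D i ω) (fun ω (i : Fin n) => X i ω) P) :
    (Clo / 3) * ((p : ℝ) / n)
        ≤ ∫ ω, ‖(2 / (n : ℝ)) • ∑ i, (2 * D i ω - 1) • X i ω‖ ^ 2 ∂P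
      ∧ ∫ ω, ‖(2 / (n : ℝ)) • ∑ i, (2 * D i ω - 1) • X i ω‖ ^ 2 ∂P
        ≤ (Chi / 3) * ((p : ℝ) / n) :=
  complete_randomization_imbalance_bounds_general P n p hn hneven X D Clo Chi hClo hCloChi f hXmeas
    hXindep hXlaw hfsupp hfbound hDmeas hDlaw hDX
end

section
/- Let V be a real random variable whose distribution has a density f with respect to Lebesgue measure, supported on [0,1], with C̲ ≤ f(u) ≤ C̄ for all u ∈ [0,1], where 0 < C̲ < C̄ (necessarily C̲ ≤ 1 ≤ C̄ since f integrates to 1). Then (1/3)·(C̲ + (1−C̲)³/(C̄−C̲)²) ≤ E[V²] ≤ (1/3)·(C̄ − (C̄−1)³/(C̄−C̲)²); in particular C̲/3 ≤ E[V²] ≤ C̄/3. -/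
/-!
Write `x ^ 2 = (x ^ 2 - t ^ 2) + t ^ 2` for a cut point `t ∈ [0, 1]`. The weight `x ^ 2 - t ^ 2`
is nonpositive on `[0, t]` and nonnegative on `[t, 1]`, so `∫ f x²` is bounded below by
`t² ∫ f + ∫₀ᵗ Chi (x² - t²) + ∫ₜ¹ Clo (x² - t²)`, a cubic in `t`. It is maximal at
`t = (1 - Clo) / (Chi - Clo)`, the cut at which the density equal to `Chi` on `[0, t]` and to `Clo`
on `(t, 1]` has mass one. The upper bound is the lower bound applied to `-f`.
-/

open MeasureTheory Set

theorem integral_comp_eq_integral_mul_of_map_eq_withDensity {Ω α : Type*} [MeasurableSpace Ω]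
    [MeasurableSpace α] {P : Measure Ω} {μ : Measure α} {V : Ω → α} {f g : α → ℝ}
    (hV : Measurable V) (hf : Measurable f) (hf0 : ∀ᵐ x ∂μ, 0 ≤ f x) (hg : Measurable g)
    (hlaw : P.map V = μ.withDensity fun x => ENNReal.ofReal (f x)) :
    ∫ ω, g (V ω) ∂P = ∫ x, f x * g x ∂μ := by
  rw [← integral_map hV.aemeasurable hg.aestronglyMeasurable, hlaw,
    integral_withDensity_eq_integral_toReal_smul hf.ennreal_ofReal
      (ae_of_all _ fun _ => ENNReal.ofReal_lt_top)]
  refine integral_congr_ae (hf0.mono fun x hx => ?_)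
  simp only [ENNReal.toReal_ofReal hx, smul_eq_mul]

theorem integral_eq_intervalIntegral_of_eq_zero_off_Icc {f : ℝ → ℝ} {a b : ℝ}
    (hab : a ≤ b) (hf : ∀ x ∉ Icc a b, f x = 0) : ∫ x, f x = ∫ x in a..b, f x := by
  rw [intervalIntegral.integral_of_le hab, ← integral_Icc_eq_integral_Ioc,
    setIntegral_eq_integral_of_forall_compl_eq_zero hf]

theorem intervalIntegral_mem_Icc_of_mem_Icc {f : ℝ → ℝ} {a b : ℝ}
    (hf : IntervalIntegrable f volume 0 1) (hbound : ∀ x ∈ Icc (0 : ℝ) 1, f x ∈ Icc a b) :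
    ∫ x in (0)..1, f x ∈ Icc a b := by
  constructor
  · simpa using intervalIntegral.integral_mono_on zero_le_one intervalIntegrable_const hf
      fun x hx => (hbound x hx).1
  · simpa using intervalIntegral.integral_mono_on zero_le_one hf intervalIntegrable_const
      fun x hx => (hbound x hx).2

theorem le_intervalIntegral_mul_sq {f : ℝ → ℝ} {a b m t : ℝ}
    (hf : IntervalIntegrable f volume 0 1) (hm : ∫ x in (0)..1, f x = m)
    (hbound : ∀ x ∈ Icc (0 : ℝ) 1, f x ∈ Icc a b) (ht : t ∈ Icc (0 : ℝ) 1) :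
    a / 3 + (m - a) * t ^ 2 - 2 / 3 * (b - a) * t ^ 3 ≤ ∫ x in (0)..1, f x * x ^ 2 := by
  have h0 : (0 : ℝ) ∈ Icc 0 1 := left_mem_Icc.2 zero_le_one
  have h1 : (1 : ℝ) ∈ Icc 0 1 := right_mem_Icc.2 zero_le_one
  have hint : ∀ {u v}, u ∈ Icc (0 : ℝ) 1 → v ∈ Icc (0 : ℝ) 1 →
      IntervalIntegrable (fun x => f x * (x ^ 2 - t ^ 2)) volume u v := fun hu hv =>
    (hf.mono_set (by rw [uIcc_of_le zero_le_one]; exact uIcc_subset_Icc hu hv)).mul_continuousOn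
      (by fun_prop)
  have hint_const : ∀ u v c, IntervalIntegrable (fun x => c * (x ^ 2 - t ^ 2)) volume u v :=
    fun u v _ => Continuous.intervalIntegrable (by fun_prop) u v
  have hval : ∀ u v c,
      ∫ x in u..v, c * (x ^ 2 - t ^ 2) = c * ((v ^ 3 - u ^ 3) / 3 - (v - u) * t ^ 2) := by
    intro u v c
    norm_num [intervalIntegral.integral_const_mul, integral_pow]
  have hleft : ∫ x in (0)..t, b * (x ^ 2 - t ^ 2) ≤ ∫ x in (0)..t, f x * (x ^ 2 - t ^ 2) :=
    intervalIntegral.integral_mono_on ht.1 (hint_const _ _ _) (hint h0 ht) fun x hx =>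
      mul_le_mul_of_nonpos_right (hbound x ⟨hx.1, hx.2.trans ht.2⟩).2
        (by nlinarith [hx.1, hx.2])
  have hright : ∫ x in t..1, a * (x ^ 2 - t ^ 2) ≤ ∫ x in t..1, f x * (x ^ 2 - t ^ 2) :=
    intervalIntegral.integral_mono_on ht.2 (hint_const _ _ _) (hint ht h1) fun x hx =>
      mul_le_mul_of_nonneg_right (hbound x ⟨ht.1.trans hx.1, hx.2⟩).1
        (by nlinarith [hx.1, hx.2, ht.1])
  have hshift :
      ∫ x in (0)..1, f x * x ^ 2 = (∫ x in (0)..1, f x * (x ^ 2 - t ^ 2)) + t ^ 2 * m := by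
    rw [← hm, ← intervalIntegral.integral_const_mul,
      ← intervalIntegral.integral_add (hint h0 h1) (hf.const_mul _)]
    congr 1 with x
    ring
  rw [hval] at hleft hright
  rw [hshift, ← intervalIntegral.integral_add_adjacent_intervals (hint h0 ht) (hint ht h1)]
  linarith

theorem le_intervalIntegral_mul_sq_of_lt {f : ℝ → ℝ} {a b m : ℝ}
    (hf : IntervalIntegrable f volume 0 1) (hm : ∫ x in (0)..1, f x = m)
    (hbound : ∀ x ∈ Icc (0 : ℝ) 1, f x ∈ Icc a b) (hab : a < b) :
    1 / 3 * (a + (m - a) ^ 3 / (b - a) ^ 2) ≤ ∫ x in (0)..1, f x * x ^ 2 := by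
  obtain ⟨ham, hmb⟩ : m ∈ Icc a b := hm ▸ intervalIntegral_mem_Icc_of_mem_Icc hf hbound
  have hba : 0 < b - a := sub_pos.2 hab
  have ht : (m - a) / (b - a) ∈ Icc (0 : ℝ) 1 :=
    ⟨div_nonneg (sub_nonneg.2 ham) hba.le, (div_le_one hba).2 (by linarith)⟩
  convert le_intervalIntegral_mul_sq hf hm hbound ht using 1
  field_simp
  ring

theorem intervalIntegral_mul_sq_le_of_lt {f : ℝ → ℝ} {a b m : ℝ}
    (hf : IntervalIntegrable f volume 0 1) (hm : ∫ x in (0)..1, f x = m)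
    (hbound : ∀ x ∈ Icc (0 : ℝ) 1, f x ∈ Icc a b) (hab : a < b) :
    ∫ x in (0)..1, f x * x ^ 2 ≤ 1 / 3 * (b - (b - m) ^ 3 / (b - a) ^ 2) := by
  have hneg := le_intervalIntegral_mul_sq_of_lt (f := fun x => -f x) hf.neg
    (by rw [intervalIntegral.integral_neg, hm])
    (fun x hx => ⟨neg_le_neg (hbound x hx).2, neg_le_neg (hbound x hx).1⟩) (neg_lt_neg hab)
  rw [show -m - -b = b - m by ring, show -a - -b = b - a by ring] at hneg
  simp only [neg_mul, intervalIntegral.integral_neg] at hneg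
  linarith

/-- If a real random variable `V` has a density `f` (w.r.t. Lebesgue
measure) supported on `[0,1]` with `Clo ≤ f ≤ Chi` there, `0 < Clo < Chi`, then
`(1/3)(Clo + (1−Clo)³/(Chi−Clo)²) ≤ E[V²] ≤ (1/3)(Chi − (Chi−1)³/(Chi−Clo)²)`;
in particular `Clo/3 ≤ E[V²] ≤ Chi/3`. -/
theorem second_moment_density_bounds
    {Ω : Type*} [MeasurableSpace Ω] (P : Measure Ω) [IsProbabilityMeasure P]
    (V : Ω → ℝ) (hVmeas : Measurable V)
    (Clo Chi : ℝ) (hClo : 0 < Clo) (hCloChi : Clo < Chi)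
    (f : ℝ → ℝ) (hfmeas : Measurable f)
    (hlaw : Measure.map V P = volume.withDensity (fun u => ENNReal.ofReal (f u)))
    (hfsupp : ∀ u : ℝ, u ∉ Set.Icc (0 : ℝ) 1 → f u = 0)
    (hfbound : ∀ u ∈ Set.Icc (0 : ℝ) 1, Clo ≤ f u ∧ f u ≤ Chi) :
    ((1 / 3) * (Clo + (1 - Clo) ^ 3 / (Chi - Clo) ^ 2) ≤ ∫ ω, (V ω) ^ 2 ∂P
        ∧ ∫ ω, (V ω) ^ 2 ∂P ≤ (1 / 3) * (Chi - (Chi - 1) ^ 3 / (Chi - Clo) ^ 2))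
      ∧ (Clo / 3 ≤ ∫ ω, (V ω) ^ 2 ∂P ∧ ∫ ω, (V ω) ^ 2 ∂P ≤ Chi / 3) := by
  have hf0 : ∀ u, 0 ≤ f u := fun u => by
    by_cases hu : u ∈ Icc (0 : ℝ) 1
    · exact hClo.le.trans (hfbound u hu).1
    · exact (hfsupp u hu).ge
  have hmoment (g : ℝ → ℝ) (hg : Measurable g) :
      ∫ ω, g (V ω) ∂P = ∫ x in (0)..1, f x * g x := by
    rw [integral_comp_eq_integral_mul_of_map_eq_withDensity hVmeas hfmeas (ae_of_all _ hf0) hg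
        hlaw,
      integral_eq_intervalIntegral_of_eq_zero_off_Icc zero_le_one
        fun x hx => by rw [hfsupp x hx, zero_mul]]
  have hmass : ∫ x in (0)..1, f x = 1 := by simpa using (hmoment 1 measurable_const).symm
  have hf : IntervalIntegrable f volume 0 1 :=
    intervalIntegral.intervalIntegrable_of_integral_ne_zero (by rw [hmass]; exact one_ne_zero)
  obtain ⟨hClo1, hChi1⟩ : (1 : ℝ) ∈ Icc Clo Chi :=
    hmass ▸ intervalIntegral_mem_Icc_of_mem_Icc hf hfbound
  have hEV : ∫ ω, V ω ^ 2 ∂P = ∫ x in (0)..1, f x * x ^ 2 := hmoment (· ^ 2) (by fun_prop)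
  have hlow := le_intervalIntegral_mul_sq_of_lt hf hmass hfbound hCloChi
  have hupp := intervalIntegral_mul_sq_le_of_lt hf hmass hfbound hCloChi
  have hlow_gap : 0 ≤ (1 - Clo) ^ 3 / (Chi - Clo) ^ 2 :=
    div_nonneg (pow_nonneg (sub_nonneg.2 hClo1) 3) (sq_nonneg _)
  have hupp_gap : 0 ≤ (Chi - 1) ^ 3 / (Chi - Clo) ^ 2 :=
    div_nonneg (pow_nonneg (sub_nonneg.2 hChi1) 3) (sq_nonneg _)
  rw [hEV]
  exact ⟨⟨hlow, hupp⟩, by linarith, by linarith⟩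
end

section
/- Let n be an even positive integer, p ≥ 1, and let X_1,...,X_n be i.i.d. square-integrable random vectors in ℝ^p. For each realization of (X_1,...,X_n), let M*(X) be a perfect matching of {1,...,n} that minimizes Σ_{{i,i'}∈M} ||X_i − X_{i'}||² over all perfect matchings M. Then E[ (4/n²)·Σ_{{i,i'}∈M*(X)} ||X_i − X_{i'}||² ] ≤ (4/n)·Σ_{k=1}^p Var(X_{k1}), where X_{k1} is the k-th coordinate of X_1. (This is the matched-pairs upper bound: under the matched-pairs design the expected squared imbalance E[||B_{n,p}(X)||²] equals the left-hand side.) -/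
/-!
A fixed perfect matching is a competitor for `M*(X)`, so the expected optimal cost is at most the
expected cost of a fixed matching. In a fixed pair the two vectors are independent copies of `X₁`,
hence `E‖X_i - X_{i'}‖² = 2 ∑ₖ Var(X_{k1})`; there are `n / 2` pairs, and `(4 / n²) · (n / 2) · 2`
is `4 / n`.
-/

open MeasureTheory ProbabilityTheory

namespace ProbabilityTheory

section RealPair

variable {Ω : Type*} [MeasurableSpace Ω] {μ : Measure Ω} [IsProbabilityMeasure μ] {U V : Ω → ℝ}

lemma IndepFun.integral_sub_sq (hU : MemLp U 2 μ) (hV : MemLp V 2 μ) (h : U ⟂ᵢ[μ] V) :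
    ∫ ω, (U ω - V ω) ^ 2 ∂μ = Var[U; μ] + Var[V; μ] + (μ[U] - μ[V]) ^ 2 := by
  have hvar : Var[U - V; μ] = Var[U; μ] + Var[V; μ] := by
    rw [variance_sub hU hV, h.covariance_eq_zero hU hV]
    ring
  have hmean : μ[U - V] = μ[U] - μ[V] :=
    integral_sub (hU.integrable one_le_two) (hV.integrable one_le_two)
  rw [← hvar, variance_eq_sub (hU.sub hV), hmean]
  simp

lemma IdentDistrib.integral_sub_sq_of_indepFun (hid : IdentDistrib U V μ μ) (hU : MemLp U 2 μ)
    (h : U ⟂ᵢ[μ] V) : ∫ ω, (U ω - V ω) ^ 2 ∂μ = 2 * Var[U; μ] := by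
  rw [IndepFun.integral_sub_sq hU (hid.memLp_snd hU) h, ← hid.variance_eq, hid.integral_eq]
  ring

end RealPair

section EuclideanPair

variable {Ω κ : Type*} [MeasurableSpace Ω] {μ : Measure Ω} [IsProbabilityMeasure μ] [Fintype κ]
  {X Y : Ω → EuclideanSpace ℝ κ}

lemma IdentDistrib.integral_norm_sub_sq_of_indepFun (hid : IdentDistrib X Y μ μ)
    (hX : MemLp X 2 μ) (h : X ⟂ᵢ[μ] Y) :
    ∫ ω, ‖X ω - Y ω‖ ^ 2 ∂μ = 2 * ∑ k, Var[fun ω ↦ X ω k; μ] := by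
  have hY := hid.memLp_snd hX
  have coord_memLp (Z : Ω → EuclideanSpace ℝ κ) (hZ : MemLp Z 2 μ) (k : κ) :
      MemLp (fun ω ↦ Z ω k) 2 μ :=
    (EuclideanSpace.proj k : EuclideanSpace ℝ κ →L[ℝ] ℝ).comp_memLp' hZ
  have proj_meas (k : κ) : Measurable fun v : EuclideanSpace ℝ κ ↦ v k := by fun_prop
  simp_rw [EuclideanSpace.norm_sq_eq, WithLp.ofLp_sub, Pi.sub_apply, Real.norm_eq_abs, sq_abs]
  have hint (k : κ) : Integrable (fun ω ↦ (X ω k - Y ω k) ^ 2) μ :=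
    ((coord_memLp X hX k).sub (coord_memLp Y hY k)).integrable_sq
  rw [integral_finsetSum _ fun k _ ↦ hint k, Finset.mul_sum]
  refine Finset.sum_congr rfl fun k _ ↦ ?_
  exact (hid.comp (proj_meas k)).integral_sub_sq_of_indepFun (coord_memLp X hX k)
    (h.comp (proj_meas k) (proj_meas k))

end EuclideanPair

end ProbabilityTheory

/-- A perfect matching of `ι` is encoded as `e : α × Bool ≃ ι`, with the pairs
`{e (j, false), e (j, true)}`. -/
def matchingCost {α ι E : Type*} [Fintype α] [SeminormedAddCommGroup E] (x : ι → E)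
    (e : α × Bool ≃ ι) : ℝ :=
  ∑ j, ‖x (e (j, false)) - x (e (j, true))‖ ^ 2

lemma matchingCost_nonneg {α ι E : Type*} [Fintype α] [SeminormedAddCommGroup E] (x : ι → E)
    (e : α × Bool ≃ ι) : 0 ≤ matchingCost x e :=
  Finset.sum_nonneg fun _ _ ↦ sq_nonneg _

section IID

variable {Ω α ι κ : Type*} [MeasurableSpace Ω] {μ : Measure Ω} [Fintype α] [Fintype κ]
  {X : ι → Ω → EuclideanSpace ℝ κ} {i₀ : ι}

lemma integrable_norm_sub_sq {E : Type*} [NormedAddCommGroup E] {Y Z : Ω → E}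
    (hY : MemLp Y 2 μ) (hZ : MemLp Z 2 μ) : Integrable (fun ω ↦ ‖Y ω - Z ω‖ ^ 2) μ :=
  (hY.sub hZ).integrable_norm_pow two_ne_zero

lemma integrable_matchingCost (hL2 : ∀ i, MemLp (X i) 2 μ) (e : α × Bool ≃ ι) :
    Integrable (fun ω ↦ matchingCost (X · ω) e) μ :=
  integrable_finsetSum _ fun _ _ ↦ integrable_norm_sub_sq (hL2 _) (hL2 _)

lemma integral_matchingCost_of_iid [IsProbabilityMeasure μ]
    (hindep : Pairwise fun i j ↦ X i ⟂ᵢ[μ] X j)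
    (hident : ∀ i, IdentDistrib (X i) (X i₀) μ μ) (hL2 : MemLp (X i₀) 2 μ) (e : α × Bool ≃ ι) :
    ∫ ω, matchingCost (X · ω) e ∂μ = Fintype.card α * (2 * ∑ k, Var[fun ω ↦ X i₀ ω k; μ]) := by
  have hL2' (i : ι) : MemLp (X i) 2 μ := (hident i).symm.memLp_snd hL2
  have hpair (j : α) : ∫ ω, ‖X (e (j, false)) ω - X (e (j, true)) ω‖ ^ 2 ∂μ
      = 2 * ∑ k, Var[fun ω ↦ X i₀ ω k; μ] := by
    have hne : e (j, false) ≠ e (j, true) := by simp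
    rw [((hident _).trans (hident _).symm).integral_norm_sub_sq_of_indepFun (hL2' _)
      (hindep hne)]
    congr 1
    refine Finset.sum_congr rfl fun k _ ↦ ?_
    have hproj : Measurable fun v : EuclideanSpace ℝ κ ↦ v k := by fun_prop
    exact ((hident _).comp hproj).variance_eq
  simp only [matchingCost]
  rw [integral_finsetSum _ fun _ _ ↦ integrable_norm_sub_sq (hL2' _) (hL2' _)]
  simp only [hpair, Finset.sum_const, Finset.card_univ, nsmul_eq_mul]

end IID

/-- Let `X₁,…,Xₙ` (`n = 2m` even) be i.i.d. square-integrable random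
vectors in `ℝᵖ`, and for each realization let `Mstar ω : Fin m × Bool ≃ Fin n` be a perfect
matching minimizing the sum of within-pair squared distances. Then the expected squared
imbalance of the matched-pairs design,
`E[(4/n²) ∑_{pairs of Mstar} ‖X_i − X_{i'}‖²]`, is at most `(4/n) ∑ₖ Var(X_{k1})`. -/
theorem matched_pairs_imbalance_upper_bound
    {Ω : Type*} [MeasurableSpace Ω] (P : Measure Ω) [IsProbabilityMeasure P]
    (m n p : ℕ) (hm : 0 < m) (hnm : n = 2 * m)
    (X : Fin n → Ω → EuclideanSpace ℝ (Fin p))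
    (hXindep : iIndepFun X P)
    (hXident : ∀ i, Measure.map (X i) P = Measure.map (X ⟨0, by omega⟩) P)
    (hXL2 : ∀ i, MemLp (X i) 2 P)
    (Mstar : Ω → (Fin m × Bool ≃ Fin n))
    (hmin : ∀ ω (e : Fin m × Bool ≃ Fin n),
      ∑ j : Fin m, ‖X (Mstar ω (j, false)) ω - X (Mstar ω (j, true)) ω‖ ^ 2
        ≤ ∑ j : Fin m, ‖X (e (j, false)) ω - X (e (j, true)) ω‖ ^ 2) :
    ∫ ω, (4 / (n : ℝ) ^ 2) *
        ∑ j : Fin m, ‖X (Mstar ω (j, false)) ω - X (Mstar ω (j, true)) ω‖ ^ 2 ∂P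
      ≤ (4 / (n : ℝ)) * ∑ k, variance (fun ω => X ⟨0, by omega⟩ ω k) P := by
  set i₀ : Fin n := ⟨0, by omega⟩
  have hident (i : Fin n) : IdentDistrib (X i) (X i₀) P P :=
    ⟨(hXL2 i).aemeasurable, (hXL2 i₀).aemeasurable, hXident i⟩
  let e₀ : Fin m × Bool ≃ Fin n := Fintype.equivOfCardEq (by simp [hnm, mul_comm])
  calc ∫ ω, (4 / (n : ℝ) ^ 2) * matchingCost (X · ω) (Mstar ω) ∂P
      ≤ ∫ ω, (4 / (n : ℝ) ^ 2) * matchingCost (X · ω) e₀ ∂P := by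
        -- `Mstar` need not be measurable: only the upper bound has to be integrable here.
        refine integral_mono_of_nonneg (ae_of_all _ fun ω ↦ ?_)
          ((integrable_matchingCost hXL2 e₀).const_mul _) (ae_of_all _ fun ω ↦ ?_)
        · exact mul_nonneg (by positivity) (matchingCost_nonneg _ _)
        · exact mul_le_mul_of_nonneg_left (hmin ω e₀) (by positivity)
    _ = (4 / (n : ℝ) ^ 2) * (m * (2 * ∑ k, Var[fun ω ↦ X i₀ ω k; P])) := by
        rw [integral_const_mul, integral_matchingCost_of_iid (fun _ _ ↦ hXindep.indepFun)
          hident (hXL2 i₀), Fintype.card_fin]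
    _ = (4 / (n : ℝ)) * ∑ k, Var[fun ω ↦ X i₀ ω k; P] := by
        subst hnm
        field_simp
        push_cast
        ring
end

section
/- Let X be a random element of a measurable space, let π = π(X) be a measurable function of X with values in [c, 1−c] for some c ∈ (0, 1/2], let Z₁ = ζ(X) ∈ ℝ^q be a measurable function of X and set Z₀ = ((1−π)/π)·Z₁. Let β₀, β₁ ∈ ℝ^q, let ε(1) and ε(0) be square-integrable real random variables with E[ε(1) | X] = E[ε(0) | X] = 0 almost surely, assume Z₁ has square-integrable components, and define Y(1) = Z₁'β₁ + ε(1) and Y(0) = Z₀'β₀ + ε(0). Then E[ π(1−π)·( Y(1)/π + Y(0)/(1−π) )² ] = E[ (π/(1−π))·( Z₀'(β₁+β₀) )² ] + E[ π(1−π)·( ε(1)/π + ε(0)/(1−π) )² ]. -/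
/-!
Since `Z₀ = ((1 - π)/π) Z₁`, the regression parts of `Y(1)/π + Y(0)/(1 - π)` combine into
`Z₁'(β₁ + β₀)/π`, so the integrand splits pointwise into the balanced term, a cross term
`f₁(X) ε(1) + f₀(X) ε(0)` and the noise term. Each `f_d(X)` is square integrable and
`σ(X)`-measurable, so the cross term has mean `E[f_d(X) E[ε(d) | X]] = 0`. The bounds
`c ≤ π ≤ 1 - c` keep every weight bounded, which makes all three pieces integrable.
-/

open MeasureTheory ProbabilityTheory

theorem abs_div_le_inv_of_le {a p c : ℝ} (ha : |a| ≤ 1) (hc : 0 < c) (hcp : c ≤ p) :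
    |a / p| ≤ c⁻¹ := by
  have hp := hc.trans_le hcp
  rw [abs_div, abs_of_pos hp, div_eq_mul_inv, ← one_mul c⁻¹]
  exact mul_le_mul ha (inv_anti₀ hc hcp) (inv_nonneg.2 hp.le) zero_le_one

theorem ipw_sq_eq_balanced_add_cross_add_noise {ι : Type*} [Fintype ι] {p : ℝ} (hp : p ≠ 0)
    (hp' : 1 - p ≠ 0) (z β₀ β₁ : ι → ℝ) (e₁ e₀ : ℝ) :
    let S := ∑ k, ((1 - p) / p * z k) * (β₁ k + β₀ k)
    p * (1 - p) * (((∑ k, z k * β₁ k) + e₁) / p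
        + ((∑ k, ((1 - p) / p * z k) * β₀ k) + e₀) / (1 - p)) ^ 2
      = p / (1 - p) * S ^ 2 + (2 * S * e₁ + 2 * (p / (1 - p) * S) * e₀)
        + p * (1 - p) * (e₁ / p + e₀ / (1 - p)) ^ 2 := by
  intro S
  have hS : S = (1 - p) / p * ((∑ k, z k * β₁ k) + ∑ k, z k * β₀ k) := by
    simp only [S, Finset.mul_sum, ← Finset.sum_add_distrib]
    exact Finset.sum_congr rfl fun k _ => by ring
  have h₀ : ∑ k, ((1 - p) / p * z k) * β₀ k = (1 - p) / p * ∑ k, z k * β₀ k := by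
    simp only [Finset.mul_sum, mul_assoc]
  rw [hS, h₀]
  field_simp
  ring

namespace MeasureTheory

variable {α : Type*} {m₀ : MeasurableSpace α} {μ : Measure α}

theorem MemLp.bdd_mul {p : ENNReal} {f u : α → ℝ} {C : ℝ} (hu : MemLp u p μ)
    (hf : AEStronglyMeasurable f μ) (hf_bound : ∀ᵐ x ∂μ, ‖f x‖ ≤ C) :
    MemLp (fun x => f x * u x) p μ :=
  hu.mul' (memLp_top_of_bound hf C hf_bound)

theorem integral_mul_eq_zero_of_condExp_eq_zero {m : MeasurableSpace α} (hm : m ≤ m₀)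
    [SigmaFinite (μ.trim hm)] {f ε : α → ℝ} (hf : AEStronglyMeasurable[m] f μ)
    (hfε : Integrable (f * ε) μ) (hε : Integrable ε μ) (hcond : μ[ε | m] =ᵐ[μ] 0) :
    ∫ x, f x * ε x ∂μ = 0 := calc
  ∫ x, f x * ε x ∂μ = ∫ x, (μ[f * ε | m]) x ∂μ := (integral_condExp hm).symm
  _ = ∫ x, (f * μ[ε | m]) x ∂μ :=
    integral_congr_ae (condExp_mul_of_aestronglyMeasurable_left hf hfε hε)
  _ = 0 := by
    have hzero : f * μ[ε | m] =ᵐ[μ] 0 := hcond.mono fun x hx => by simp [hx]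
    rw [integral_congr_ae hzero, Pi.zero_def, integral_zero]

section

variable {Ω E : Type*} [MeasurableSpace Ω] [MeasurableSpace E] {P : Measure Ω} {X : Ω → E}

theorem MemLp.comp_div_mul {p : ENNReal} {c : ℝ} {a d : E → ℝ} {u : Ω → ℝ} (hu : MemLp u p P)
    (hX : Measurable X) (ha : Measurable a) (hd : Measurable d) (ha_le : ∀ x, |a x| ≤ 1)
    (hc : 0 < c) (hd_ge : ∀ x, c ≤ d x) :
    MemLp (fun ω => a (X ω) / d (X ω) * u ω) p P :=
  hu.bdd_mul ((ha.div hd).comp hX).aestronglyMeasurable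
    (ae_of_all _ fun _ => abs_div_le_inv_of_le (ha_le _) hc (hd_ge _))

theorem integral_comp_mul_eq_zero_of_condExp_eq_zero [IsFiniteMeasure P] (hX : Measurable X)
    {g : E → ℝ} {ε : Ω → ℝ} (hg : Measurable g) (hgX : MemLp (fun ω => g (X ω)) 2 P)
    (hε : MemLp ε 2 P) (hcond : P[ε | MeasurableSpace.comap X inferInstance] =ᵐ[P] 0) :
    ∫ ω, g (X ω) * ε ω ∂P = 0 :=
  integral_mul_eq_zero_of_condExp_eq_zero hX.comap_le
    (hg.comp (comap_measurable X)).aestronglyMeasurable (hgX.integrable_mul hε)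
    (hε.integrable one_le_two) hcond

theorem integrable_ipw_noise_sq {π : E → ℝ} {c : ℝ} {ε₁ ε₀ : Ω → ℝ} (hX : Measurable X)
    (hπ : Measurable π) (hc : 0 < c) (hlo : ∀ x, c ≤ π x) (hhi : ∀ x, c ≤ 1 - π x)
    (hε₁ : MemLp ε₁ 2 P) (hε₀ : MemLp ε₀ 2 P) :
    Integrable (fun ω => π (X ω) * (1 - π (X ω)) *
      (ε₁ ω / π (X ω) + ε₀ ω / (1 - π (X ω))) ^ 2) P := by
  have h1π : Measurable fun x => 1 - π x := by fun_prop
  have he : MemLp (fun ω => ε₁ ω / π (X ω) + ε₀ ω / (1 - π (X ω))) 2 P := by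
    simpa only [one_div_mul_eq_div, ← Pi.add_def] using
      (hε₁.comp_div_mul hX measurable_const hπ (fun _ => abs_one.le) hc hlo).add
      (hε₀.comp_div_mul hX measurable_const h1π (fun _ => abs_one.le) hc hhi)
  refine he.integrable_sq.bdd_mul (c := 1) ((hπ.mul h1π).comp hX).aestronglyMeasurable
    (ae_of_all _ fun ω => ?_)
  rw [Real.norm_eq_abs, abs_le]
  constructor <;> nlinarith [hlo (X ω), hhi (X ω)]

theorem integral_add_cross_add_of_condExp_eq_zero [IsFiniteMeasure P] (hX : Measurable X)
    {G₁ G₃ : Ω → ℝ} {g₁ g₀ : E → ℝ} {ε₁ ε₀ : Ω → ℝ} (hG₁ : Integrable G₁ P)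
    (hG₃ : Integrable G₃ P) (hg₁ : Measurable g₁) (hg₀ : Measurable g₀)
    (hg₁X : MemLp (fun ω => g₁ (X ω)) 2 P) (hg₀X : MemLp (fun ω => g₀ (X ω)) 2 P)
    (hε₁ : MemLp ε₁ 2 P) (hε₀ : MemLp ε₀ 2 P)
    (hcond₁ : P[ε₁ | MeasurableSpace.comap X inferInstance] =ᵐ[P] 0)
    (hcond₀ : P[ε₀ | MeasurableSpace.comap X inferInstance] =ᵐ[P] 0) :
    ∫ ω, G₁ ω + (g₁ (X ω) * ε₁ ω + g₀ (X ω) * ε₀ ω) + G₃ ω ∂P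
      = (∫ ω, G₁ ω ∂P) + ∫ ω, G₃ ω ∂P := by
  have hC₁ : Integrable (fun ω => g₁ (X ω) * ε₁ ω) P := hg₁X.integrable_mul hε₁
  have hC₀ : Integrable (fun ω => g₀ (X ω) * ε₀ ω) P := hg₀X.integrable_mul hε₀
  have hC : Integrable (fun ω => g₁ (X ω) * ε₁ ω + g₀ (X ω) * ε₀ ω) P := hC₁.add hC₀
  rw [integral_add ?_ hG₃, integral_add hG₁ hC, integral_add hC₁ hC₀,
    integral_comp_mul_eq_zero_of_condExp_eq_zero hX hg₁ hg₁X hε₁ hcond₁,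
    integral_comp_mul_eq_zero_of_condExp_eq_zero hX hg₀ hg₀X hε₀ hcond₀, add_zero, add_zero]
  exact hG₁.add hC

end

end MeasureTheory

theorem poisson_variance_decomposition_general
    {Ω : Type*} [MeasurableSpace Ω] (P : Measure Ω) [IsProbabilityMeasure P]
    {E : Type*} [MeasurableSpace E]
    (q : ℕ)
    (X : Ω → E) (hXmeas : Measurable X)
    (c : ℝ) (hc0 : 0 < c)
    (π : E → ℝ) (hπmeas : Measurable π)
    (hπrange : ∀ x, π x ∈ Set.Icc c (1 - c))
    (ζ : E → Fin q → ℝ) (hζmeas : Measurable ζ)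
    (hζL2 : ∀ k, MemLp (fun ω => ζ (X ω) k) 2 P)
    (β₀ β₁ : Fin q → ℝ)
    (ε1 ε0 : Ω → ℝ)
    (hε1L2 : MemLp ε1 2 P) (hε0L2 : MemLp ε0 2 P)
    (hε1cond : P[ε1 | MeasurableSpace.comap X inferInstance] =ᵐ[P] 0)
    (hε0cond : P[ε0 | MeasurableSpace.comap X inferInstance] =ᵐ[P] 0) :
    ∫ ω, π (X ω) * (1 - π (X ω)) *
        (((∑ k, ζ (X ω) k * β₁ k) + ε1 ω) / π (X ω)
          + ((∑ k, ((1 - π (X ω)) / π (X ω) * ζ (X ω) k) * β₀ k) + ε0 ω)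
              / (1 - π (X ω))) ^ 2 ∂P
      = (∫ ω, (π (X ω) / (1 - π (X ω))) *
            (∑ k, ((1 - π (X ω)) / π (X ω) * ζ (X ω) k) * (β₁ k + β₀ k)) ^ 2 ∂P)
        + ∫ ω, π (X ω) * (1 - π (X ω)) *
            (ε1 ω / π (X ω) + ε0 ω / (1 - π (X ω))) ^ 2 ∂P := by
  have hlo : ∀ x, c ≤ π x := fun x => (hπrange x).1
  have hhi : ∀ x, c ≤ 1 - π x := fun x => by linarith [(hπrange x).2]
  have hπ_le : ∀ x, |π x| ≤ 1 := fun x => abs_le.2 ⟨by linarith [hlo x], by linarith [hhi x]⟩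
  have h1π_le : ∀ x, |1 - π x| ≤ 1 := fun x => abs_le.2 ⟨by linarith [hhi x], by linarith [hlo x]⟩
  have h1πm : Measurable fun x => 1 - π x := by fun_prop
  set S : E → ℝ := fun x => ∑ k, ((1 - π x) / π x * ζ x k) * (β₁ k + β₀ k)
  have hS : MemLp (fun ω => S (X ω)) 2 P := memLp_finsetSum _ fun k _ =>
    ((hζL2 k).comp_div_mul hXmeas h1πm hπmeas h1π_le hc0 hlo).mul_const _
  have hS₀ : MemLp (fun ω => 2 * (π (X ω) / (1 - π (X ω)) * S (X ω))) 2 P :=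
    (hS.comp_div_mul hXmeas hπmeas h1πm hπ_le hc0 hhi).const_mul 2
  have hG₁ : Integrable (fun ω => π (X ω) / (1 - π (X ω)) * S (X ω) ^ 2) P :=
    memLp_one_iff_integrable.1 <| (memLp_one_iff_integrable.2 hS.integrable_sq).comp_div_mul
      hXmeas hπmeas h1πm hπ_le hc0 hhi
  calc _ = ∫ ω, π (X ω) / (1 - π (X ω)) * S (X ω) ^ 2
          + (2 * S (X ω) * ε1 ω + 2 * (π (X ω) / (1 - π (X ω)) * S (X ω)) * ε0 ω)
          + π (X ω) * (1 - π (X ω)) * (ε1 ω / π (X ω) + ε0 ω / (1 - π (X ω))) ^ 2 ∂P :=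
        integral_congr_ae (ae_of_all _ fun ω => ipw_sq_eq_balanced_add_cross_add_noise
          (hc0.trans_le (hlo _)).ne' (hc0.trans_le (hhi _)).ne' _ _ _ _ _)
    _ = _ := integral_add_cross_add_of_condExp_eq_zero (g₁ := fun x => 2 * S x)
          (g₀ := fun x => 2 * (π x / (1 - π x) * S x)) hXmeas hG₁
          (integrable_ipw_noise_sq hXmeas hπmeas hc0 hlo hhi hε1L2 hε0L2)
          (by fun_prop) (by fun_prop) (hS.const_mul 2) hS₀ hε1L2 hε0L2 hε1cond hε0cond

/-- With propensity `π(X) ∈ [c, 1−c]`, balancing covariates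
`Z₁ = ζ(X) ∈ ℝ^q`, `Z₀ = ((1−π)/π)·Z₁`, and potential outcomes `Y(1) = Z₁'β₁ + ε(1)`,
`Y(0) = Z₀'β₀ + ε(0)` where `E[ε(d)|X] = 0`, the Poisson-randomization asymptotic variance
decomposes as
`E[π(1−π)(Y(1)/π + Y(0)/(1−π))²] = E[(π/(1−π))(Z₀'(β₁+β₀))²] + E[π(1−π)(ε(1)/π + ε(0)/(1−π))²]`. -/
theorem poisson_variance_decomposition
    {Ω : Type*} [MeasurableSpace Ω] (P : Measure Ω) [IsProbabilityMeasure P]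
    {E : Type*} [MeasurableSpace E]
    (q : ℕ) (hq : 0 < q)
    (X : Ω → E) (hXmeas : Measurable X)
    (c : ℝ) (hc0 : 0 < c) (hc : c ≤ 1 / 2)
    (π : E → ℝ) (hπmeas : Measurable π)
    (hπrange : ∀ x, π x ∈ Set.Icc c (1 - c))
    (ζ : E → Fin q → ℝ) (hζmeas : Measurable ζ)
    (hζL2 : ∀ k, MemLp (fun ω => ζ (X ω) k) 2 P)
    (β₀ β₁ : Fin q → ℝ)
    (ε1 ε0 : Ω → ℝ) (hε1meas : Measurable ε1) (hε0meas : Measurable ε0)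
    (hε1L2 : MemLp ε1 2 P) (hε0L2 : MemLp ε0 2 P)
    (hε1cond : P[ε1 | MeasurableSpace.comap X inferInstance] =ᵐ[P] 0)
    (hε0cond : P[ε0 | MeasurableSpace.comap X inferInstance] =ᵐ[P] 0) :
    ∫ ω, π (X ω) * (1 - π (X ω)) *
        (((∑ k, ζ (X ω) k * β₁ k) + ε1 ω) / π (X ω)
          + ((∑ k, ((1 - π (X ω)) / π (X ω) * ζ (X ω) k) * β₀ k) + ε0 ω)
              / (1 - π (X ω))) ^ 2 ∂P
      = (∫ ω, (π (X ω) / (1 - π (X ω))) *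
            (∑ k, ((1 - π (X ω)) / π (X ω) * ζ (X ω) k) * (β₁ k + β₀ k)) ^ 2 ∂P)
        + ∫ ω, π (X ω) * (1 - π (X ω)) *
            (ε1 ω / π (X ω) + ε0 ω / (1 - π (X ω))) ^ 2 ∂P :=
  poisson_variance_decomposition_general P q X hXmeas c hc0 π hπmeas hπrange ζ hζmeas hζL2 β₀ β₁ ε1
    ε0 hε1L2 hε0L2 hε1cond hε0cond
end

section
/- Let B ≥ 1, let α ∈ (0,1), and let T_1,...,T_B be exchangeable real random variables, i.e., for every permutation σ of {1,...,B}, the vector (T_{σ(1)},...,T_{σ(B)}) has the same joint distribution as (T_1,...,T_B). Define the randomization critical value c = inf{ t ∈ ℝ : (1/B)·Σ_{j=1}^B 1{T_j ≤ t} ≥ 1−α }. Then P( T_1 > c ) ≤ α. -/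
open MeasureTheory ProbabilityTheory
open scoped ENNReal

noncomputable section RandAux

open Classical in
/-- helper sum: number (as a real) of coordinates `≤ t` -/
def critSet (B : ℕ) (α : ℝ) (x : Fin B → ℝ) : Set ℝ :=
  {t : ℝ | (1 - α) ≤ (1 / (B : ℝ)) * ∑ j, (if x j ≤ t then (1 : ℝ) else 0)}

def crit (B : ℕ) (α : ℝ) (x : Fin B → ℝ) : ℝ := sInf (critSet B α x)

variable {B : ℕ} {α : ℝ}

lemma sum_indic_mono (x : Fin B → ℝ) {t t' : ℝ} (htt : t ≤ t') :
    (∑ j, (if x j ≤ t then (1 : ℝ) else 0))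
      ≤ ∑ j, (if x j ≤ t' then (1 : ℝ) else 0) := by
  refine Finset.sum_le_sum fun j _ => ?_
  by_cases h : x j ≤ t
  · simp [h, h.trans htt]
  · simp only [h, if_false]
    split <;> norm_num

lemma critSet_mono {x : Fin B → ℝ} {t t' : ℝ} (htt : t ≤ t')
    (ht : t ∈ critSet B α x) : t' ∈ critSet B α x := by
  simp only [critSet, Set.mem_setOf_eq] at ht ⊢
  refine le_trans ht ?_
  have h0 : (0:ℝ) ≤ 1 / (B:ℝ) := by positivity
  exact mul_le_mul_of_nonneg_left (sum_indic_mono x htt) h0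

lemma critSet_nonempty (hB : 0 < B) (hα0 : 0 < α) (x : Fin B → ℝ) :
    (critSet B α x).Nonempty := by
  have hne : (Finset.univ : Finset (Fin B)).Nonempty := ⟨⟨0, hB⟩, Finset.mem_univ _⟩
  refine ⟨Finset.univ.sup' hne x, ?_⟩
  have hall : ∀ j, x j ≤ Finset.univ.sup' hne x := fun j =>
    Finset.le_sup' x (Finset.mem_univ j)
  have : (∑ j, (if x j ≤ Finset.univ.sup' hne x then (1 : ℝ) else 0)) = B := by
    simp [hall]
  simp only [critSet, Set.mem_setOf_eq, this]
  have hBpos : (0:ℝ) < B := by exact_mod_cast hB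
  rw [one_div, inv_mul_cancel₀ hBpos.ne']
  linarith

lemma mem_critSet_exists_le (hα1 : α < 1) {x : Fin B → ℝ} {t : ℝ}
    (ht : t ∈ critSet B α x) : ∃ j, x j ≤ t := by
  by_contra h
  push_neg at h
  have hzero : (∑ j, (if x j ≤ t then (1 : ℝ) else 0)) = 0 := by
    refine Finset.sum_eq_zero fun j _ => ?_
    simp [not_le.mpr (h j)]
  have := ht
  simp only [critSet, Set.mem_setOf_eq, hzero, mul_zero] at this
  linarith

lemma critSet_bddBelow (hB : 0 < B) (hα1 : α < 1) (x : Fin B → ℝ) :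
    BddBelow (critSet B α x) := by
  have hne : (Finset.univ : Finset (Fin B)).Nonempty := ⟨⟨0, hB⟩, Finset.mem_univ _⟩
  refine ⟨Finset.univ.inf' hne x, fun t ht => ?_⟩
  obtain ⟨j, hj⟩ := mem_critSet_exists_le hα1 ht
  exact le_trans (Finset.inf'_le x (Finset.mem_univ j)) hj

open Classical in
lemma crit_mem (hB : 0 < B) (hα0 : 0 < α) (hα1 : α < 1) (x : Fin B → ℝ) :
    crit B α x ∈ critSet B α x := by
  -- every element of critSet dominates an element of critSet that is a value of x
  have key : ∀ t ∈ critSet B α x, ∃ m ∈ critSet B α x,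
      m ≤ t ∧ m ∈ Finset.univ.image x := by
    intro t ht
    obtain ⟨j₀, hj₀⟩ := mem_critSet_exists_le hα1 ht
    set s := (Finset.univ.filter (fun j => x j ≤ t)).image x with hs
    have hsne : s.Nonempty := ⟨x j₀, Finset.mem_image_of_mem x (by simp [hj₀])⟩
    set m := s.max' hsne with hm
    obtain ⟨j', hj', hxj'⟩ := Finset.mem_image.mp (s.max'_mem hsne)
    have hmimage : m ∈ Finset.univ.image x :=
      Finset.mem_image.mpr ⟨j', Finset.mem_univ j', hxj'⟩
    have hmt : m ≤ t := by
      show s.max' hsne ≤ t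
      rw [← hxj']
      exact (Finset.mem_filter.mp hj').2
    have hle : ∀ j, x j ≤ t → x j ≤ m := by
      intro j hj
      exact s.le_max' (x j) (Finset.mem_image_of_mem x (by simp [hj]))
    have hmmem : m ∈ critSet B α x := by
      simp only [critSet, Set.mem_setOf_eq] at ht ⊢
      refine le_trans ht ?_
      have h0 : (0:ℝ) ≤ 1 / (B:ℝ) := by positivity
      refine mul_le_mul_of_nonneg_left ?_ h0
      refine Finset.sum_le_sum fun j _ => ?_
      by_cases h : x j ≤ t
      · simp [h, hle j h]
      · simp only [h, if_false]; split <;> norm_num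
    exact ⟨m, hmmem, hmt, hmimage⟩
  set Sfin := (Finset.univ.image x).filter (fun t => t ∈ critSet B α x) with hSfin
  obtain ⟨t₀, ht₀⟩ := critSet_nonempty hB hα0 x
  obtain ⟨m₀', hm₀'mem, _, hm₀'img⟩ := key t₀ ht₀
  have hSne : Sfin.Nonempty := ⟨m₀', by simp [hSfin, Finset.mem_filter, hm₀'img, hm₀'mem]⟩
  set m₀ := Sfin.min' hSne with hm₀
  have hm₀mem : m₀ ∈ critSet B α x := (Finset.mem_filter.mp (Sfin.min'_mem hSne)).2
  have hlb : ∀ t ∈ critSet B α x, m₀ ≤ t := by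
    intro t ht
    obtain ⟨m, hmmem, hmt, hmimg⟩ := key t ht
    exact le_trans (Sfin.min'_le m (Finset.mem_filter.mpr ⟨hmimg, hmmem⟩)) hmt
  have : crit B α x = m₀ :=
    le_antisymm (csInf_le (critSet_bddBelow hB hα1 x) hm₀mem)
      (le_csInf (critSet_nonempty hB hα0 x) hlb)
  rw [this]; exact hm₀mem

open Classical in
lemma crit_perm (σ : Equiv.Perm (Fin B)) (x : Fin B → ℝ) :
    crit B α (fun j => x (σ j)) = crit B α x := by
  have : critSet B α (fun j => x (σ j)) = critSet B α x := by
    ext t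
    simp only [critSet, Set.mem_setOf_eq]
    rw [Equiv.sum_comp σ (fun j => if x j ≤ t then (1:ℝ) else 0)]
  rw [crit, crit, this]

open Classical in
lemma event_measurable (hB : 0 < B) (hα0 : 0 < α) (hα1 : α < 1) (j : Fin B) :
    MeasurableSet {x : Fin B → ℝ | crit B α x < x j} := by
  have heq : {x : Fin B → ℝ | crit B α x < x j}
      = ⋃ q : ℚ, ({x : Fin B → ℝ | (q:ℝ) ∈ critSet B α x} ∩ {x | (q:ℝ) < x j}) := by
    ext x
    simp only [Set.mem_setOf_eq, Set.mem_iUnion, Set.mem_inter_iff]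
    constructor
    · intro h
      obtain ⟨s, hs, hslt⟩ :=
        (csInf_lt_iff (critSet_bddBelow hB hα1 x) (critSet_nonempty hB hα0 x)).mp h
      obtain ⟨q, hq1, hq2⟩ := exists_rat_btwn hslt
      exact ⟨q, critSet_mono hq1.le hs, hq2⟩
    · rintro ⟨q, hq, hqx⟩
      exact lt_of_le_of_lt (csInf_le (critSet_bddBelow hB hα1 x) hq) hqx
  rw [heq]
  refine MeasurableSet.iUnion fun q => (MeasurableSet.inter ?_ ?_)
  · have : Measurable fun x : Fin B → ℝ =>
        (1 / (B:ℝ)) * ∑ i, (if x i ≤ (q:ℝ) then (1:ℝ) else 0) := by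
      refine Measurable.const_mul ?_ _
      refine Finset.measurable_sum _ fun i _ => ?_
      exact Measurable.ite (measurableSet_le (measurable_pi_apply i) measurable_const)
        measurable_const measurable_const
    exact measurableSet_le measurable_const this
  · exact measurableSet_lt measurable_const (measurable_pi_apply j)

open Classical in
lemma count_bound (hB : 0 < B) (hα0 : 0 < α) (hα1 : α < 1) (x : Fin B → ℝ) :
    (∑ j, (if crit B α x < x j then (1:ℝ) else 0)) ≤ B * α := by
  set c := crit B α x with hc
  have hmem := crit_mem hB hα0 hα1 x
  have hBpos : (0:ℝ) < B := by exact_mod_cast hB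
  have h1 : (B:ℝ) * (1 - α) ≤ ∑ j, (if x j ≤ c then (1:ℝ) else 0) := by
    have := hmem
    simp only [critSet, Set.mem_setOf_eq] at this
    rw [div_mul_eq_mul_div, one_mul, le_div_iff₀ hBpos] at this
    linarith [this]
  have h2 : (∑ j, (if x j ≤ c then (1:ℝ) else 0))
      + (∑ j, (if c < x j then (1:ℝ) else 0)) = B := by
    rw [← Finset.sum_add_distrib]
    have hone : ∀ j : Fin B,
        (if x j ≤ c then (1:ℝ) else 0) + (if c < x j then (1:ℝ) else 0) = 1 := by
      intro j
      by_cases h : x j ≤ c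
      · simp [h, not_lt.mpr h]
      · simp [h, lt_of_not_ge h]
    rw [Finset.sum_congr rfl fun j _ => hone j]
    simp
  linarith

end RandAux

/-- If `T₁,…,T_B` are exchangeable real random variables and
`c = inf{t : (1/B) ∑ⱼ 1{Tⱼ ≤ t} ≥ 1−α}` is the randomization critical value, then the
randomization test has level at most `α`: `P(T₁ > c) ≤ α`. -/
theorem randomization_test_level
    {Ω : Type*} [MeasurableSpace Ω] (P : Measure Ω) [IsProbabilityMeasure P]
    (B : ℕ) (hB : 0 < B) (α : ℝ) (hα0 : 0 < α) (hα1 : α < 1)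
    (T : Fin B → Ω → ℝ)
    (hTmeas : ∀ j, Measurable (T j))
    (hexch : ∀ σ : Equiv.Perm (Fin B),
      Measure.map (fun ω (j : Fin B) => T (σ j) ω) P
        = Measure.map (fun ω (j : Fin B) => T j ω) P) :
    P {ω | sInf {t : ℝ |
          (1 - α) ≤ (1 / (B : ℝ)) * ∑ j, (if T j ω ≤ t then (1 : ℝ) else 0)}
        < T ⟨0, hB⟩ ω}
      ≤ ENNReal.ofReal α := by
  classical
  set X : Ω → (Fin B → ℝ) := fun ω j => T j ω with hX
  have hXmeas : Measurable X := measurable_pi_lambda _ hTmeas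
  set E : Fin B → Set (Fin B → ℝ) := fun j => {x | crit B α x < x j} with hE
  have hEmeas : ∀ j, MeasurableSet (E j) := fun j => event_measurable hB hα0 hα1 j
  set A : Fin B → Set Ω := fun j => X ⁻¹' E j with hA
  have hAmeas : ∀ j, MeasurableSet (A j) := fun j => hXmeas (hEmeas j)
  -- the target set is A ⟨0, hB⟩
  have hset : {ω | sInf {t : ℝ |
          (1 - α) ≤ (1 / (B : ℝ)) * ∑ j, (if T j ω ≤ t then (1 : ℝ) else 0)}
        < T ⟨0, hB⟩ ω} = A ⟨0, hB⟩ := rfl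
  rw [hset]
  -- equal probabilities across j
  have hequal : ∀ j : Fin B, P (A j) = P (A ⟨0, hB⟩) := by
    intro j
    set σ : Equiv.Perm (Fin B) := Equiv.swap ⟨0, hB⟩ j with hσ
    set π : (Fin B → ℝ) → (Fin B → ℝ) := fun y i => y (σ i) with hπ
    have hπmeas : Measurable π :=
      measurable_pi_lambda _ fun i => measurable_pi_apply (σ i)
    have hmapπ : Measure.map π (Measure.map X P) = Measure.map X P := by
      rw [Measure.map_map hπmeas hXmeas]
      have : (π ∘ X) = fun ω (i : Fin B) => T (σ i) ω := rfl
      rw [this, hexch σ]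
    have hpre : π ⁻¹' (E ⟨0, hB⟩) = E j := by
      ext y
      simp only [hE, hπ, Set.mem_preimage, Set.mem_setOf_eq]
      rw [crit_perm σ y]
      have : σ ⟨0, hB⟩ = j := Equiv.swap_apply_left _ _
      rw [this]
    calc P (A j) = Measure.map X P (E j) := (Measure.map_apply hXmeas (hEmeas j)).symm
      _ = Measure.map X P (π ⁻¹' (E ⟨0, hB⟩)) := by rw [hpre]
      _ = Measure.map π (Measure.map X P) (E ⟨0, hB⟩) :=
          (Measure.map_apply hπmeas (hEmeas ⟨0, hB⟩)).symm
      _ = Measure.map X P (E ⟨0, hB⟩) := by rw [hmapπ]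
      _ = P (A ⟨0, hB⟩) := Measure.map_apply hXmeas (hEmeas ⟨0, hB⟩)
  -- sum of probabilities
  have hsum : (B : ℝ≥0∞) * P (A ⟨0, hB⟩) = ∑ j, P (A j) := by
    rw [Finset.sum_congr rfl (fun j _ => hequal j)]
    simp [Finset.card_univ]
  have hBne : (B : ℝ≥0∞) ≠ 0 := Nat.cast_ne_zero.mpr hB.ne'
  have hBnetop : (B : ℝ≥0∞) ≠ ⊤ := ENNReal.natCast_ne_top B
  have hmain : (B : ℝ≥0∞) * P (A ⟨0, hB⟩) ≤ (B : ℝ≥0∞) * ENNReal.ofReal α := by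
    rw [hsum]
    have h1 : ∀ j : Fin B, P (A j) = ∫⁻ ω, (A j).indicator (fun _ => (1:ℝ≥0∞)) ω ∂P := by
      intro j
      exact (lintegral_indicator_one (hAmeas j)).symm
    calc ∑ j, P (A j)
        = ∫⁻ ω, ∑ j, (A j).indicator (fun _ => (1:ℝ≥0∞)) ω ∂P := by
          rw [lintegral_finset_sum _
            (fun j _ => (measurable_const.indicator (hAmeas j)))]
          exact Finset.sum_congr rfl fun j _ => h1 j
      _ ≤ ∫⁻ _, ENNReal.ofReal ((B:ℝ) * α) ∂P := by
          refine lintegral_mono fun ω => ?_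
          have hpoint : ∀ j : Fin B, (A j).indicator (fun _ => (1:ℝ≥0∞)) ω
              = ENNReal.ofReal (if crit B α (X ω) < X ω j then (1:ℝ) else 0) := by
            intro j
            by_cases h : ω ∈ A j
            · have : crit B α (X ω) < X ω j := h
              simp [Set.indicator_of_mem h, this]
            · have : ¬ crit B α (X ω) < X ω j := h
              simp [Set.indicator_of_notMem h, this]
          rw [Finset.sum_congr rfl fun j _ => hpoint j]
          rw [← ENNReal.ofReal_sum_of_nonneg (fun j _ => by positivity)]
          exact ENNReal.ofReal_le_ofReal (count_bound hB hα0 hα1 (X ω))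
      _ = ENNReal.ofReal ((B:ℝ) * α) := by
          simp [lintegral_const]
      _ = (B : ℝ≥0∞) * ENNReal.ofReal α := by
          rw [ENNReal.ofReal_mul (by positivity), ENNReal.ofReal_natCast]
  exact (ENNReal.mul_le_mul_iff_right hBne hBnetop).mp hmain
end

section
/- Let c ∈ (0, 1/2], r ≥ 2, let (X_i)_{i≥1} be i.i.d. real random variables with E[|X_1|^r] < ∞, let π be a measurable function with values in [c, 1−c], and set π_i = π(X_i). For each n, let (D_{n,1},...,D_{n,n}) be {0,1}-valued random variables and q_n ≥ 1 a constant such that, almost surely, | (1/n)·Σ_{i=1}^n X_i·D_{n,i}/π_i − (1/n)·Σ_{i=1}^n X_i | ≤ (q_n/n)·max_{1≤i≤n} |X_i/π_i|. Define Δ_n = (1/n)·Σ_{i=1}^n X_i·D_{n,i}/π_i − (1/n)·Σ_{i=1}^n X_i. Then (n^{1−1/r}/q_n)·Δ_n → 0 in probability as n → ∞. Moreover, if |X_1| ≤ K almost surely for a constant K, then |Δ_n| ≤ K·q_n/(c·n) almost surely. -/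
/-!
Fix `ε > 0` and put `tₙ = ε c n^{1/r}`. Since `π ≥ c`, the rounding bound gives
`|(n^{1-1/r}/qₙ) Δₙ| ≤ maxᵢ<ₙ |Xᵢ| / (c n^{1/r})`, so the event `{ε ≤ |(n^{1-1/r}/qₙ) Δₙ|}` lies
in `⋃ᵢ<ₙ {tₙ ≤ |Xᵢ|}`. Since the `Xᵢ` are identically distributed, its probability is at most
`n P(tₙ ≤ |X₀|) = (ε c)^{-r} tₙ^r P(tₙ ≤ |X₀|)`, and by Markov's inequality
`t^r P(t ≤ |X₀|) ≤ E[|X₀|^r; t ≤ |X₀|]`, a tail of the finite `r`-th moment, which vanishes as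
`t → ∞`. In the bounded case `maxᵢ |Xᵢ/πᵢ| ≤ K/c` directly.
-/

open MeasureTheory ProbabilityTheory Filter Topology

section

variable {Ω : Type*} [MeasurableSpace Ω] {μ : Measure Ω} {r : ℝ}

theorem tendsto_setIntegral_abs_rpow_tail {Y : Ω → ℝ} (hY : Measurable Y)
    (hint : Integrable (fun ω => |Y ω| ^ r) μ) :
    Tendsto (fun t : ℝ => ∫ ω in {ω | t ≤ |Y ω|}, |Y ω| ^ r ∂μ) atTop (𝓝 0) := by
  have hempty : ⋂ t : ℝ, {ω | t ≤ |Y ω|} = ∅ :=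
    Set.eq_empty_of_forall_notMem fun ω hω =>
      (lt_add_one |Y ω|).not_ge (Set.mem_iInter.1 hω (|Y ω| + 1))
  simpa [hempty] using tendsto_setIntegral_of_antitone (μ := μ)
    (s := fun t : ℝ => {ω | t ≤ |Y ω|}) (fun t => measurableSet_le measurable_const hY.abs)
    (fun s t hst ω hω => hst.trans hω) ⟨0, hint.integrableOn⟩

theorem rpow_mul_measureReal_le_setIntegral [IsFiniteMeasure μ] (hr : 0 < r) {Y : Ω → ℝ}
    (hY : Measurable Y) (hint : Integrable (fun ω => |Y ω| ^ r) μ) {t : ℝ} (ht : 0 ≤ t) :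
    t ^ r * μ.real {ω | t ≤ |Y ω|} ≤ ∫ ω in {ω | t ≤ |Y ω|}, |Y ω| ^ r ∂μ := by
  have hS : MeasurableSet {ω | t ≤ |Y ω|} := measurableSet_le measurable_const hY.abs
  rw [mul_comm, ← smul_eq_mul, ← setIntegral_const]
  exact setIntegral_mono_on integrableOn_const hint.integrableOn hS
    fun ω hω => Real.rpow_le_rpow ht hω hr.le

theorem tendsto_rpow_mul_measureReal_le_abs [IsFiniteMeasure μ] (hr : 0 < r) {Y : Ω → ℝ}
    (hY : Measurable Y) (hint : Integrable (fun ω => |Y ω| ^ r) μ) :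
    Tendsto (fun t : ℝ => t ^ r * μ.real {ω | t ≤ |Y ω|}) atTop (𝓝 0) :=
  tendsto_of_tendsto_of_tendsto_of_le_of_le' tendsto_const_nhds
    (tendsto_setIntegral_abs_rpow_tail hY hint)
    ((eventually_ge_atTop 0).mono fun t ht => by positivity)
    ((eventually_ge_atTop 0).mono fun t ht => rpow_mul_measureReal_le_setIntegral hr hY hint ht)

theorem measureReal_exists_mem_le_card_mul {ι β : Type*} [MeasurableSpace β] {s : Finset ι}
    {X : ι → Ω → β} {Y : Ω → β} (hX : ∀ i ∈ s, IdentDistrib (X i) Y μ μ) {A : Set β}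
    (hA : MeasurableSet A) :
    μ.real {ω | ∃ i ∈ s, X i ω ∈ A} ≤ s.card * μ.real (Y ⁻¹' A) := by
  have hunion : {ω | ∃ i ∈ s, X i ω ∈ A} = ⋃ i ∈ s, X i ⁻¹' A := by ext; simp
  calc μ.real {ω | ∃ i ∈ s, X i ω ∈ A}
      ≤ ∑ i ∈ s, μ.real (X i ⁻¹' A) := hunion ▸ measureReal_biUnion_finset_le s _
    _ = ∑ _i ∈ s, μ.real (Y ⁻¹' A) :=
        Finset.sum_congr rfl fun i hi => congrArg ENNReal.toReal ((hX i hi).measure_mem_eq hA)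
    _ = s.card * μ.real (Y ⁻¹' A) := by rw [Finset.sum_const, nsmul_eq_mul]

theorem tendsto_measureReal_exists_rpow_le_abs [IsFiniteMeasure μ] (hr : 0 < r)
    {X : ℕ → Ω → ℝ} (hX0 : Measurable (X 0)) (hX : ∀ i, IdentDistrib (X i) (X 0) μ μ)
    (hint : Integrable (fun ω => |X 0 ω| ^ r) μ) {ε : ℝ} (hε : 0 < ε) :
    Tendsto (fun n : ℕ => μ.real {ω | ∃ i ∈ Finset.range n, ε * (n : ℝ) ^ (1 / r) ≤ |X i ω|})
      atTop (𝓝 0) := by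
  set t : ℕ → ℝ := fun n => ε * (n : ℝ) ^ (1 / r)
  have ht : Tendsto t atTop atTop :=
    ((tendsto_rpow_atTop (by positivity)).comp tendsto_natCast_atTop_atTop).const_mul_atTop hε
  have hcard : ∀ n : ℕ, (n : ℝ) = t n ^ r / ε ^ r := fun n => by
    rw [Real.mul_rpow hε.le (by positivity), one_div, Real.rpow_inv_rpow (by positivity) hr.ne']
    field_simp
  have hupper : Tendsto (fun n => t n ^ r * μ.real {ω | t n ≤ |X 0 ω|} / ε ^ r) atTop (𝓝 0) := by
    simpa using ((tendsto_rpow_mul_measureReal_le_abs hr hX0 hint).comp ht).div_const (ε ^ r)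
  refine tendsto_of_tendsto_of_tendsto_of_le_of_le tendsto_const_nhds hupper
    (fun n => measureReal_nonneg) fun n => ?_
  calc μ.real {ω | ∃ i ∈ Finset.range n, t n ≤ |X i ω|}
      ≤ (Finset.range n).card * μ.real {ω | t n ≤ |X 0 ω|} :=
        measureReal_exists_mem_le_card_mul (fun i _ => hX i)
          (measurableSet_le measurable_const measurable_abs)
    _ = t n ^ r * μ.real {ω | t n ≤ |X 0 ω|} / ε ^ r := by
        rw [Finset.card_range, hcard n, div_mul_eq_mul_div]

end

theorem sup'_abs_div_le_div {ι : Type*} {s : Finset ι} (hs : s.Nonempty) {x p : ι → ℝ} {c : ℝ}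
    (hc : 0 < c) (hp : ∀ i ∈ s, c ≤ p i) :
    s.sup' hs (fun i => |x i / p i|) ≤ s.sup' hs (fun i => |x i|) / c := by
  refine Finset.sup'_le hs _ fun i hi => ?_
  rw [abs_div, abs_of_pos (hc.trans_le (hp i hi))]
  exact (div_le_div_of_nonneg_left (abs_nonneg _) hc (hp i hi)).trans
    (div_le_div_of_nonneg_right (Finset.le_sup' (fun i => |x i|) hi) hc.le)

theorem abs_rpow_one_sub_div_mul_le {N q r δ M : ℝ} (hN : 0 < N) (hq : 0 < q)
    (hδ : |δ| ≤ q / N * M) : |N ^ (1 - 1 / r) / q * δ| ≤ M / N ^ (1 / r) := by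
  have hcoef : 0 ≤ N ^ (1 - 1 / r) / q := by positivity
  calc |N ^ (1 - 1 / r) / q * δ| ≤ N ^ (1 - 1 / r) / q * (q / N * M) := by
        rw [abs_mul, abs_of_nonneg hcoef]; gcongr
    _ = M / N ^ (1 / r) := by
        rw [Real.rpow_sub hN, Real.rpow_one]; field_simp

theorem exists_mul_rpow_le_abs_of_abs_le_sup' {ι : Type*} {s : Finset ι} (hs : s.Nonempty)
    {x p : ι → ℝ} {c q r N δ ε : ℝ} (hc : 0 < c) (hq : 0 < q) (hN : 0 < N)
    (hp : ∀ i ∈ s, c ≤ p i) (hδ : |δ| ≤ q / N * s.sup' hs (fun i => |x i / p i|))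
    (hε : ε ≤ |N ^ (1 - 1 / r) / q * δ|) : ∃ i ∈ s, ε * c * N ^ (1 / r) ≤ |x i| := by
  have hNr : 0 < N ^ (1 / r) := by positivity
  have h : ε ≤ s.sup' hs (fun i => |x i|) / c / N ^ (1 / r) :=
    hε.trans ((abs_rpow_one_sub_div_mul_le hN hq hδ).trans
      (div_le_div_of_nonneg_right (sup'_abs_div_le_div hs hc hp) hNr.le))
  rw [le_div_iff₀ hNr, le_div_iff₀ hc, mul_right_comm] at h
  exact (Finset.le_sup'_iff hs).1 h

theorem abs_le_of_abs_le_sup'_abs_div {ι : Type*} {s : Finset ι} (hs : s.Nonempty)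
    {x p : ι → ℝ} {c q N K δ : ℝ} (hc : 0 < c) (hq : 0 ≤ q) (hN : 0 ≤ N)
    (hp : ∀ i ∈ s, c ≤ p i) (hx : ∀ i ∈ s, |x i| ≤ K)
    (hδ : |δ| ≤ q / N * s.sup' hs (fun i => |x i / p i|)) : |δ| ≤ K * q / (c * N) :=
  calc |δ| ≤ q / N * (s.sup' hs (fun i => |x i|) / c) := by
        grw [hδ, sup'_abs_div_le_div hs hc hp]
    _ ≤ q / N * (K / c) := by grw [Finset.sup'_le hs _ hx]
    _ = K * q / (c * N) := by ring

theorem cube_balancing_approximation_general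
    {Ω : Type*} [MeasurableSpace Ω] (P : Measure Ω) [IsProbabilityMeasure P]
    (c : ℝ) (hc0 : 0 < c)
    (r : ℝ) (hr : 2 ≤ r)
    (X : ℕ → Ω → ℝ)
    (hXmeas : ∀ i, Measurable (X i))
    (hXident : ∀ i, Measure.map (X i) P = Measure.map (X 0) P)
    (hXmom : Integrable (fun ω => |X 0 ω| ^ r) P)
    (π : ℝ → ℝ)
    (hπrange : ∀ x, π x ∈ Set.Icc c (1 - c))
    (q : ℕ → ℝ) (hq : ∀ n, 1 ≤ q n)
    (Δ : ℕ → Ω → ℝ)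
    (hbound : ∀ n, ∀ hn : 0 < n, ∀ᵐ ω ∂P, |Δ n ω|
      ≤ (q n / n) * ((Finset.range n).sup' (Finset.nonempty_range_iff.mpr hn.ne')
          fun i => |X i ω / π (X i ω)|)) :
    TendstoInMeasure P
        (fun (n : ℕ) ω => ((n : ℝ) ^ ((1 : ℝ) - 1 / r) / q n) * Δ n ω)
        Filter.atTop (fun _ => (0 : ℝ))
      ∧ ∀ K : ℝ, (∀ᵐ ω ∂P, |X 0 ω| ≤ K) →
          ∀ n, 0 < n → ∀ᵐ ω ∂P, |Δ n ω| ≤ K * q n / (c * n) := by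
  have hident : ∀ i, IdentDistrib (X i) (X 0) P P := fun i =>
    ⟨(hXmeas i).aemeasurable, (hXmeas 0).aemeasurable, hXident i⟩
  have hπ : ∀ i ω, c ≤ π (X i ω) := fun i ω => (hπrange _).1
  refine ⟨tendstoInMeasure_iff_measureReal_dist.2 fun ε hε => ?_, fun K hK n hn => ?_⟩
  · refine tendsto_of_tendsto_of_tendsto_of_le_of_le' tendsto_const_nhds
      (tendsto_measureReal_exists_rpow_le_abs (by linarith) (hXmeas 0) hident hXmom
        (mul_pos hε hc0)) (Eventually.of_forall fun n => measureReal_nonneg) ?_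
    filter_upwards [eventually_gt_atTop 0] with n hn
    refine ENNReal.toReal_mono (measure_ne_top _ _) (measure_mono_ae ?_)
    filter_upwards [hbound n hn] with ω hω (hεω : ε ≤ dist _ 0)
    exact exists_mul_rpow_le_abs_of_abs_le_sup' _ hc0 (by linarith [hq n])
      (by exact_mod_cast hn) (fun i _ => hπ i ω) hω
      (by simpa only [Real.dist_eq, sub_zero] using hεω)
  · have hXK : ∀ᵐ ω ∂P, ∀ i, |X i ω| ≤ K := ae_all_iff.2 fun i =>
      (hident i).symm.ae_snd (measurableSet_le measurable_abs measurable_const) hK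
    filter_upwards [hbound n hn, hXK] with ω hω hωK
    exact abs_le_of_abs_le_sup'_abs_div _ hc0 (by linarith [hq n]) n.cast_nonneg
      (fun i _ => hπ i ω) (fun i _ => hωK i) hω

/-- For i.i.d. covariates with a finite `r`-th moment (`r ≥ 2`),
propensities `π(Xᵢ) ∈ [c, 1−c]`, and designs satisfying the cube-method rounding bound
`|Δₙ| ≤ (qₙ/n)·maxᵢ |Xᵢ/πᵢ|` a.s., where `Δₙ` is the Horvitz–Thompson covariate imbalance,
one has `(n^{1−1/r}/qₙ)·Δₙ → 0` in probability; moreover if `|X₁| ≤ K` a.s. then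
`|Δₙ| ≤ K·qₙ/(c·n)` a.s. -/
theorem cube_balancing_approximation
    {Ω : Type*} [MeasurableSpace Ω] (P : Measure Ω) [IsProbabilityMeasure P]
    (c : ℝ) (hc0 : 0 < c) (hc : c ≤ 1 / 2)
    (r : ℝ) (hr : 2 ≤ r)
    (X : ℕ → Ω → ℝ)
    (hXmeas : ∀ i, Measurable (X i))
    (hXindep : iIndepFun X P)
    (hXident : ∀ i, Measure.map (X i) P = Measure.map (X 0) P)
    (hXmom : Integrable (fun ω => |X 0 ω| ^ r) P)
    (π : ℝ → ℝ) (hπmeas : Measurable π)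
    (hπrange : ∀ x, π x ∈ Set.Icc c (1 - c))
    (D : ℕ → ℕ → Ω → ℝ)
    (hD01 : ∀ n i ω, D n i ω = 0 ∨ D n i ω = 1)
    (q : ℕ → ℝ) (hq : ∀ n, 1 ≤ q n)
    (Δ : ℕ → Ω → ℝ)
    (hΔ : ∀ n ω, Δ n ω
      = (1 / (n : ℝ)) * ∑ i ∈ Finset.range n, X i ω * D n i ω / π (X i ω)
        - (1 / (n : ℝ)) * ∑ i ∈ Finset.range n, X i ω)
    (hbound : ∀ n, ∀ hn : 0 < n, ∀ᵐ ω ∂P, |Δ n ω|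
      ≤ (q n / n) * ((Finset.range n).sup' (Finset.nonempty_range_iff.mpr hn.ne')
          fun i => |X i ω / π (X i ω)|)) :
    TendstoInMeasure P
        (fun (n : ℕ) ω => ((n : ℝ) ^ ((1 : ℝ) - 1 / r) / q n) * Δ n ω)
        Filter.atTop (fun _ => (0 : ℝ))
      ∧ ∀ K : ℝ, (∀ᵐ ω ∂P, |X 0 ω| ≤ K) →
          ∀ n, 0 < n → ∀ᵐ ω ∂P, |Δ n ω| ≤ K * q n / (c * n) :=
  cube_balancing_approximation_general P c hc0 r hr X hXmeas hXident hXmom π hπrange q hq Δ hbound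
end
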